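/- arXiv:2408.00198 — 6 statements merged into one kernel-verified Lean document; each statement's English description precedes it below -/
import Mathlib

section
/- Let q be odd, G = SL_2(F_q), and B = {(a b; 0 a^{-1}) : a ∈ F_q^×, b ∈ F_q}, U = {(1 b; 0 1) : b ∈ F_q}, and T = {(a 0; 0 a^{-1}) : a ∈ F_q^×}. For g, h ∈ GL_2(F_q), write H^g = g^{-1}Hg. Then: (1) if #(B^g ∩ U^h) > 1 then U^h ⊆ B^g; (2) if B^g ≠ B^h then B^g ∩ B^h is conjugate to T in GL_2(F_q); (3) if B^g, B^h, B^k are pairwise distinct then B^g ∩ B^h ∩ B^k = {±1}. -/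
/-!
Since `B` is the stabilizer in `SL₂` of the line `K e₁` and `T` that of both lines `K e₁` and
`K e₂`, the group `B^g` is the stabilizer of the line through `g⁻¹ e₁`, and distinct conjugates
of `B` correspond to linearly independent such vectors. Two independent vectors are
`k⁻¹ e₁, k⁻¹ e₂` for some `k`, so `B^g ∩ B^h = T^k`. An element of `SL₂` stabilizing three
pairwise independent lines is a scalar `c` with `c² = 1`, hence `±1`. Finally, an element
`N ≠ 1` of `U^h` fixes `h⁻¹ e₁` and has `1` as its only eigenvalue; if it also stabilizes the
line through `g⁻¹ e₁`, it fixes that vector too, so the two lines coincide (else `N = 1`), i.e.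
`B^g = B^h ⊇ U^h`.
-/

open Matrix

variable {Fq : Type*} [Field Fq] [Fintype Fq]

/-- The Borel subgroup `B` of `SL₂(Fq)`, as a set of matrices. -/
def Bset (Fq : Type*) [Field Fq] : Set (Matrix (Fin 2) (Fin 2) Fq) :=
  {M | ∃ (a : Fqˣ) (b : Fq), M = !![(a : Fq), b; 0, ((a⁻¹ : Fqˣ) : Fq)]}

/-- The unipotent subgroup `U` of `SL₂(Fq)`, as a set of matrices. -/
def Uset (Fq : Type*) [Field Fq] : Set (Matrix (Fin 2) (Fin 2) Fq) :=
  {M | ∃ b : Fq, M = !![1, b; 0, 1]}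

/-- The split torus `T` of `SL₂(Fq)`, as a set of matrices. -/
def Tset (Fq : Type*) [Field Fq] : Set (Matrix (Fin 2) (Fin 2) Fq) :=
  {M | ∃ a : Fqˣ, M = !![(a : Fq), 0; 0, ((a⁻¹ : Fqˣ) : Fq)]}

/-- Conjugation `H^g = g⁻¹ H g` of a set of matrices by an element of `GL₂(Fq)`. -/
def conjSet (g : GL (Fin 2) Fq) (H : Set (Matrix (Fin 2) (Fin 2) Fq)) :
    Set (Matrix (Fin 2) (Fin 2) Fq) :=
  (fun M => ((g⁻¹ : GL (Fin 2) Fq) : Matrix (Fin 2) (Fin 2) Fq) * M *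
    (g : Matrix (Fin 2) (Fin 2) Fq)) '' H

section

variable {K : Type*} [Field K]

theorem span_pair_eq_top {v w : Fin 2 → K} (h : LinearIndependent K ![v, w]) :
    Submodule.span K {v, w} = ⊤ := by
  rw [← Matrix.range_cons_cons_empty v w ![]]
  exact h.span_eq_top_of_card_eq_finrank (by simp)

theorem eq_smul_one_of_mulVec_pair {M : Matrix (Fin 2) (Fin 2) K} {v w : Fin 2 → K} {c : K}
    (hvw : LinearIndependent K ![v, w]) (hv : M *ᵥ v = c • v) (hw : M *ᵥ w = c • w) :
    M = c • 1 := by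
  refine Matrix.toLin'.injective (LinearMap.ext_on (span_pair_eq_top hvw) ?_)
  rintro x (rfl | rfl) <;> simp [hv, hw]

theorem eq_smul_one_of_mulVec_three {M : Matrix (Fin 2) (Fin 2) K} {u v w : Fin 2 → K}
    {a b c : K} (huv : LinearIndependent K ![u, v]) (huw : LinearIndependent K ![u, w])
    (hvw : LinearIndependent K ![v, w])
    (hu : M *ᵥ u = a • u) (hv : M *ᵥ v = b • v) (hw : M *ᵥ w = c • w) :
    M = c • 1 := by
  obtain ⟨α, β, rfl⟩ : ∃ α β : K, α • u + β • v = w :=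
    Submodule.mem_span_pair.mp (span_pair_eq_top huv ▸ Submodule.mem_top)
  have hα : α ≠ 0 := by
    rintro rfl
    simpa using (LinearIndependent.pair_iff.mp hvw β (-1) (by simp)).2
  have hβ : β ≠ 0 := by
    rintro rfl
    simpa using (LinearIndependent.pair_iff.mp huw α (-1) (by simp)).2
  have key : (α * (a - c)) • u + (β * (b - c)) • v = 0 := by
    rw [Matrix.mulVec_add, Matrix.mulVec_smul, Matrix.mulVec_smul, hu, hv] at hw
    linear_combination (norm := module) hw
  obtain ⟨hac, hbc⟩ := LinearIndependent.pair_iff.mp huv _ _ key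
  have ha : a = c := by simpa [hα, sub_eq_zero] using hac
  subst ha
  exact eq_smul_one_of_mulVec_pair huw hu hw

def lineStabilizer (v : Fin 2 → K) : Set (Matrix (Fin 2) (Fin 2) K) :=
  {M | M.det = 1 ∧ ∃ c : K, M *ᵥ v = c • v}

theorem lineStabilizer_smul {v : Fin 2 → K} {t : K} (ht : t ≠ 0) :
    lineStabilizer (t • v) = lineStabilizer v := by
  ext M
  refine and_congr_right fun _ => exists_congr fun c => ?_
  rw [Matrix.mulVec_smul, smul_comm, (smul_right_injective _ ht).eq_iff]

theorem linearIndependent_of_lineStabilizer_ne {v w : Fin 2 → K} (hv : v ≠ 0) (hw : w ≠ 0)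
    (h : lineStabilizer v ≠ lineStabilizer w) : LinearIndependent K ![v, w] := by
  rw [LinearIndependent.pair_iff' hv]
  rintro t rfl
  exact h (lineStabilizer_smul (left_ne_zero_of_smul hw)).symm

theorem lineStabilizer_inter_inter_eq {u v w : Fin 2 → K} (huv : LinearIndependent K ![u, v])
    (huw : LinearIndependent K ![u, w]) (hvw : LinearIndependent K ![v, w]) :
    lineStabilizer u ∩ lineStabilizer v ∩ lineStabilizer w = {1, -1} := by
  ext M
  constructor
  · rintro ⟨⟨⟨hdet, a, hu⟩, -, b, hv⟩, -, c, hw⟩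
    have hM := eq_smul_one_of_mulVec_three huv huw hvw hu hv hw
    have hc : c * c = 1 := by simpa [hM, Matrix.det_fin_two, sq] using hdet
    rcases mul_self_eq_one_iff.mp hc with rfl | rfl <;> simp [hM]
  · have h1 : ∀ x : Fin 2 → K, 1 ∈ lineStabilizer x := fun x =>
      ⟨Matrix.det_one, 1, by simp⟩
    have h2 : ∀ x : Fin 2 → K, -1 ∈ lineStabilizer x := fun x =>
      ⟨by simp [Matrix.det_neg], -1, by rw [Matrix.neg_mulVec, Matrix.one_mulVec, neg_one_smul]⟩
    rintro (rfl | rfl)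
    exacts [⟨⟨h1 u, h1 v⟩, h1 w⟩, ⟨⟨h2 u, h2 v⟩, h2 w⟩]

theorem exists_GL_mulVec_e₁_e₂_eq {v w : Fin 2 → K} (h : LinearIndependent K ![v, w]) :
    ∃ P : GL (Fin 2) K, (P : Matrix (Fin 2) (Fin 2) K) *ᵥ ![1, 0] = v ∧
      (P : Matrix (Fin 2) (Fin 2) K) *ᵥ ![0, 1] = w := by
  have hP : IsUnit (Matrix.of ![v, w])ᵀ :=
    Matrix.linearIndependent_cols_iff_isUnit.mp h
  refine ⟨hP.unit, ?_, ?_⟩ <;> ext i <;> fin_cases i <;>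
    simp [Matrix.mulVec, dotProduct, Fin.sum_univ_two]

theorem mem_conjSet_iff {g : GL (Fin 2) K} {H : Set (Matrix (Fin 2) (Fin 2) K)}
    {M : Matrix (Fin 2) (Fin 2) K} :
    M ∈ conjSet g H ↔
      (g : Matrix (Fin 2) (Fin 2) K) * M * (↑g⁻¹ : Matrix (Fin 2) (Fin 2) K) ∈ H := by
  rw [conjSet, Set.image_eq_preimage_of_inverse
    (g := fun N => (g : Matrix (Fin 2) (Fin 2) K) * N * (↑g⁻¹ : Matrix (Fin 2) (Fin 2) K))]
  · rfl
  all_goals intro N; simp [mul_assoc]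

theorem conjSet_inter (g : GL (Fin 2) K) (H H' : Set (Matrix (Fin 2) (Fin 2) K)) :
    conjSet g (H ∩ H') = conjSet g H ∩ conjSet g H' := by
  ext M
  simp only [mem_conjSet_iff, Set.mem_inter_iff]

theorem conj_mulVec_eq_smul_iff (g : GL (Fin 2) K) (M : Matrix (Fin 2) (Fin 2) K)
    (v : Fin 2 → K) (c : K) :
    ((g : Matrix (Fin 2) (Fin 2) K) * M * (↑g⁻¹ : Matrix (Fin 2) (Fin 2) K)) *ᵥ v =
        c • v ↔
      M *ᵥ ((↑g⁻¹ : Matrix (Fin 2) (Fin 2) K) *ᵥ v) =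
        c • ((↑g⁻¹ : Matrix (Fin 2) (Fin 2) K) *ᵥ v) := by
  refine Iff.trans ?_ (Matrix.mulVec_injective_of_isUnit g.isUnit).eq_iff
  simp only [Matrix.mulVec_mulVec, Matrix.mulVec_smul, mul_assoc, Units.mul_inv, Matrix.one_mulVec]

theorem conjSet_lineStabilizer (g : GL (Fin 2) K) (v : Fin 2 → K) :
    conjSet g (lineStabilizer v) =
      lineStabilizer ((↑g⁻¹ : Matrix (Fin 2) (Fin 2) K) *ᵥ v) := by
  ext M
  rw [mem_conjSet_iff, lineStabilizer, Set.mem_ofPred_eq, Matrix.det_units_conj]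
  exact and_congr_right fun _ => exists_congr (conj_mulVec_eq_smul_iff g M v)

theorem mulVec_e₁_eq_smul_iff (M : Matrix (Fin 2) (Fin 2) K) (c : K) :
    M *ᵥ ![1, 0] = c • ![1, 0] ↔ M 0 0 = c ∧ M 1 0 = 0 := by
  simp [funext_iff, Fin.forall_fin_two]

theorem mulVec_e₂_eq_smul_iff (M : Matrix (Fin 2) (Fin 2) K) (c : K) :
    M *ᵥ ![0, 1] = c • ![0, 1] ↔ M 0 1 = 0 ∧ M 1 1 = c := by
  simp [funext_iff, Fin.forall_fin_two]

theorem Bset_eq_lineStabilizer : Bset K = lineStabilizer ![1, 0] := by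
  ext M
  simp only [Bset, lineStabilizer, Set.mem_ofPred_eq, mulVec_e₁_eq_smul_iff, exists_eq_left']
  constructor
  · rintro ⟨a, b, rfl⟩
    simp [Matrix.det_fin_two]
  · rintro ⟨hdet, h10⟩
    rw [Matrix.det_fin_two, h10, mul_zero, sub_zero] at hdet
    exact ⟨⟨M 0 0, M 1 1, hdet, by rw [mul_comm, hdet]⟩, M 0 1, by
      conv_lhs => rw [Matrix.eta_fin_two M, h10]
      rfl⟩

theorem Tset_eq_lineStabilizer_inter :
    Tset K = lineStabilizer ![1, 0] ∩ lineStabilizer ![0, 1] := by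
  ext M
  simp only [Tset, lineStabilizer, Set.mem_inter_iff, Set.mem_ofPred_eq, mulVec_e₁_eq_smul_iff,
    mulVec_e₂_eq_smul_iff, exists_eq_left']
  constructor
  · rintro ⟨a, rfl⟩
    simp [Matrix.det_fin_two]
  · rintro ⟨⟨hdet, h10⟩, -, _, h01, -⟩
    rw [Matrix.det_fin_two, h10, mul_zero, sub_zero] at hdet
    exact ⟨⟨M 0 0, M 1 1, hdet, by rw [mul_comm, hdet]⟩, by
      conv_lhs => rw [Matrix.eta_fin_two M, h10, h01]
      rfl⟩

theorem Uset_subset_Bset : Uset K ⊆ Bset K := by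
  rintro M ⟨b, rfl⟩
  exact ⟨1, b, by simp⟩

theorem eq_one_of_mem_Uset_of_mulVec_eq_smul {u : Matrix (Fin 2) (Fin 2) K} (hu : u ∈ Uset K)
    {x : Fin 2 → K} (hx : x ≠ 0) {c : K} (hc : u *ᵥ x = c • x) : c = 1 := by
  obtain ⟨b, rfl⟩ := hu
  have h0 : x 0 + b * x 1 = c * x 0 := by simpa [vecHead, vecTail] using congrFun hc 0
  have h1 : x 1 = c * x 1 := by simpa [vecHead, vecTail] using congrFun hc 1
  by_cases hx1 : x 1 = 0
  · have hx0 : x 0 ≠ 0 := fun h => hx (by ext i; fin_cases i <;> simp [h, hx1])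
    rw [hx1, mul_zero, add_zero] at h0
    exact (mul_eq_right₀ hx0).mp h0.symm
  · exact (mul_eq_right₀ hx1).mp h1.symm

def borelLine (g : GL (Fin 2) K) : Fin 2 → K :=
  (↑g⁻¹ : Matrix (Fin 2) (Fin 2) K) *ᵥ ![1, 0]

theorem borelLine_ne_zero (g : GL (Fin 2) K) : borelLine g ≠ 0 := by
  simpa [borelLine] using
    (Matrix.mulVec_injective_of_isUnit g⁻¹.isUnit).ne (a₁ := ![1, 0]) (a₂ := 0) (by simp)

theorem conjSet_Bset (g : GL (Fin 2) K) : conjSet g (Bset K) = lineStabilizer (borelLine g) := by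
  rw [Bset_eq_lineStabilizer, conjSet_lineStabilizer, borelLine]

theorem mulVec_borelLine_of_mem_conjSet_Uset {h : GL (Fin 2) K} {M : Matrix (Fin 2) (Fin 2) K}
    (hM : M ∈ conjSet h (Uset K)) : M *ᵥ borelLine h = borelLine h := by
  obtain ⟨b, hb⟩ := mem_conjSet_iff.mp hM
  simpa [borelLine] using (conj_mulVec_eq_smul_iff h M ![1, 0] 1).mp
    (by rw [hb, mulVec_e₁_eq_smul_iff]; simp)

theorem eq_one_of_mem_conjSet_Uset_of_mulVec_eq_smul {h : GL (Fin 2) K}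
    {M : Matrix (Fin 2) (Fin 2) K} (hM : M ∈ conjSet h (Uset K)) {x : Fin 2 → K} (hx : x ≠ 0)
    {c : K} (hc : M *ᵥ x = c • x) : c = 1 := by
  refine eq_one_of_mem_Uset_of_mulVec_eq_smul (mem_conjSet_iff.mp hM)
    (x := (h : Matrix (Fin 2) (Fin 2) K) *ᵥ x) ?_ ((conj_mulVec_eq_smul_iff h M _ c).mpr ?_)
  · simpa using (Matrix.mulVec_injective_of_isUnit h.isUnit).ne hx
  · simpa only [Matrix.mulVec_mulVec, mul_assoc, Units.inv_mul, mul_one, Matrix.one_mulVec]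

theorem lineStabilizer_eq_of_mem_conjSet_Uset {h : GL (Fin 2) K} {v : Fin 2 → K} (hv : v ≠ 0)
    {N : Matrix (Fin 2) (Fin 2) K} (hN : N ∈ conjSet h (Uset K)) (hNv : N ∈ lineStabilizer v)
    (hN1 : N ≠ 1) : lineStabilizer (borelLine h) = lineStabilizer v := by
  by_contra hne
  obtain ⟨-, c, hc⟩ := hNv
  obtain rfl := eq_one_of_mem_conjSet_Uset_of_mulVec_eq_smul hN hv hc
  have hNh : N *ᵥ borelLine h = (1 : K) • borelLine h := by
    rw [one_smul, mulVec_borelLine_of_mem_conjSet_Uset hN]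
  have hN_eq := eq_smul_one_of_mulVec_pair
    (linearIndependent_of_lineStabilizer_ne (borelLine_ne_zero h) hv hne) hNh hc
  exact hN1 (by simpa using hN_eq)
end

theorem borel_intersections_general :
    (∀ g h : GL (Fin 2) Fq,
      1 < Nat.card ↥(conjSet g (Bset Fq) ∩ conjSet h (Uset Fq)) →
        conjSet h (Uset Fq) ⊆ conjSet g (Bset Fq)) ∧
    (∀ g h : GL (Fin 2) Fq, conjSet g (Bset Fq) ≠ conjSet h (Bset Fq) →
      ∃ k : GL (Fin 2) Fq,
        conjSet g (Bset Fq) ∩ conjSet h (Bset Fq) = conjSet k (Tset Fq)) ∧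
    (∀ g h k : GL (Fin 2) Fq,
      conjSet g (Bset Fq) ≠ conjSet h (Bset Fq) →
      conjSet g (Bset Fq) ≠ conjSet k (Bset Fq) →
      conjSet h (Bset Fq) ≠ conjSet k (Bset Fq) →
        conjSet g (Bset Fq) ∩ conjSet h (Bset Fq) ∩ conjSet k (Bset Fq) =
          {(1 : Matrix (Fin 2) (Fin 2) Fq), (-1 : Matrix (Fin 2) (Fin 2) Fq)}) := by
  have indep {g h : GL (Fin 2) Fq} (hne : conjSet g (Bset Fq) ≠ conjSet h (Bset Fq)) :
      LinearIndependent Fq ![borelLine g, borelLine h] := by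
    rw [conjSet_Bset, conjSet_Bset] at hne
    exact linearIndependent_of_lineStabilizer_ne (borelLine_ne_zero g) (borelLine_ne_zero h) hne
  refine ⟨fun g h hcard => ?_, fun g h hne => ?_, fun g h k hgh hgk hhk => ?_⟩
  · obtain ⟨N, ⟨hNg, hNh⟩, hN1⟩ := Set.exists_ne_of_one_lt_ncard hcard 1
    rw [conjSet_Bset] at hNg ⊢
    rw [← lineStabilizer_eq_of_mem_conjSet_Uset (borelLine_ne_zero g) hNh hNg hN1,
      ← conjSet_Bset]
    exact Set.image_mono Uset_subset_Bset
  · obtain ⟨P, hP₁, hP₂⟩ := exists_GL_mulVec_e₁_e₂_eq (indep hne)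
    refine ⟨P⁻¹, ?_⟩
    rw [Tset_eq_lineStabilizer_inter, conjSet_inter, conjSet_lineStabilizer, conjSet_lineStabilizer,
      inv_inv, hP₁, hP₂, conjSet_Bset, conjSet_Bset]
  · rw [conjSet_Bset, conjSet_Bset, conjSet_Bset]
    exact lineStabilizer_inter_inter_eq (indep hgh) (indep hgk) (indep hhk)

/-- For `q` odd: (1) if `B^g ∩ U^h` has more than one element then
`U^h ⊆ B^g`; (2) if `B^g ≠ B^h` then `B^g ∩ B^h` is a `GL₂(Fq)`-conjugate of `T`;
(3) if `B^g, B^h, B^k` are pairwise distinct then `B^g ∩ B^h ∩ B^k = {±1}`. -/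
theorem borel_intersections (hq : Odd (Fintype.card Fq)) :
    (∀ g h : GL (Fin 2) Fq,
      1 < Nat.card ↥(conjSet g (Bset Fq) ∩ conjSet h (Uset Fq)) →
        conjSet h (Uset Fq) ⊆ conjSet g (Bset Fq)) ∧
    (∀ g h : GL (Fin 2) Fq, conjSet g (Bset Fq) ≠ conjSet h (Bset Fq) →
      ∃ k : GL (Fin 2) Fq,
        conjSet g (Bset Fq) ∩ conjSet h (Bset Fq) = conjSet k (Tset Fq)) ∧
    (∀ g h k : GL (Fin 2) Fq,
      conjSet g (Bset Fq) ≠ conjSet h (Bset Fq) →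
      conjSet g (Bset Fq) ≠ conjSet k (Bset Fq) →
      conjSet h (Bset Fq) ≠ conjSet k (Bset Fq) →
        conjSet g (Bset Fq) ∩ conjSet h (Bset Fq) ∩ conjSet k (Bset Fq) =
          {(1 : Matrix (Fin 2) (Fin 2) Fq), (-1 : Matrix (Fin 2) (Fin 2) Fq)}) :=
  borel_intersections_general
end

section
/- Let q be odd and T^ns ⊆ SL_2(F_q) a non-split torus, i.e., the image of ker(Nr: F_{q^2}^× → F_q^×) under the embedding α+βu ↦ (α, βt; β, α) for a non-square t = u^2 ∈ F_q^×. Then for any g ∈ GL_2(F_q), the intersection of g^{-1}(T^ns)g with any GL_2(F_q)-conjugate of the Borel subgroup B = {(a b; 0 a^{-1})} equals {±1}; and if g^{-1}(T^ns)g ≠ h^{-1}(T^ns)h then their intersection equals {±1}. -/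
open Matrix

variable {Fq : Type*} [Field Fq] [Fintype Fq]

/-- The non-split torus `Tⁿˢ` of `SL₂(Fq)` attached to a non-square `t`, as a set of
matrices: the image of the norm-one subgroup of `F_{q²}ˣ` under `α + βu ↦ (α, βt; β, α)`. -/
def Tns (Fq : Type*) [Field Fq] (t : Fq) : Set (Matrix (Fin 2) (Fin 2) Fq) :=
  {M | ∃ α β : Fq, M = !![α, β * t; β, α] ∧ α ^ 2 - t * β ^ 2 = 1}

lemma Tns_smul_one (t α : Fq) : !![α, (0:Fq) * t; 0, α] = α • (1 : Matrix (Fin 2) (Fin 2) Fq) := by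
  ext i j
  fin_cases i <;> fin_cases j <;> simp [Matrix.one_apply]

lemma one_mem_Tns (t : Fq) : (1 : Matrix (Fin 2) (Fin 2) Fq) ∈ Tns Fq t :=
  ⟨1, 0, by rw [Tns_smul_one, one_smul], by ring⟩

lemma neg_one_mem_Tns (t : Fq) : (-1 : Matrix (Fin 2) (Fin 2) Fq) ∈ Tns Fq t :=
  ⟨-1, 0, by rw [Tns_smul_one, neg_smul, one_smul], by ring⟩

lemma one_mem_Bset : (1 : Matrix (Fin 2) (Fin 2) Fq) ∈ Bset Fq :=
  ⟨1, 0, by simp [Matrix.one_fin_two]⟩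

lemma neg_one_mem_Bset : (-1 : Matrix (Fin 2) (Fin 2) Fq) ∈ Bset Fq :=
  ⟨-1, 0, by ext i j; fin_cases i <;> fin_cases j <;> norm_num [Matrix.one_apply]⟩

lemma smul_one_mem_conjSet {g : GL (Fin 2) Fq} {H : Set (Matrix (Fin 2) (Fin 2) Fq)}
    {c : Fq} (hc : c • (1 : Matrix (Fin 2) (Fin 2) Fq) ∈ H) :
    c • (1 : Matrix (Fin 2) (Fin 2) Fq) ∈ conjSet g H := by
  refine ⟨c • 1, hc, ?_⟩
  simp only [mul_smul_comm, smul_mul_assoc, mul_one]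
  rw [g.inv_mul]

lemma one_mem_conjSet {g : GL (Fin 2) Fq} {H : Set (Matrix (Fin 2) (Fin 2) Fq)}
    (h1 : (1 : Matrix (Fin 2) (Fin 2) Fq) ∈ H) : (1 : Matrix (Fin 2) (Fin 2) Fq) ∈ conjSet g H := by
  have := smul_one_mem_conjSet (g := g) (c := (1:Fq)) (by simpa using h1)
  simpa using this

lemma neg_one_mem_conjSet {g : GL (Fin 2) Fq} {H : Set (Matrix (Fin 2) (Fin 2) Fq)}
    (h1 : (-1 : Matrix (Fin 2) (Fin 2) Fq) ∈ H) :
    (-1 : Matrix (Fin 2) (Fin 2) Fq) ∈ conjSet g H := by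
  have := smul_one_mem_conjSet (g := g) (c := (-1:Fq)) (by simpa using h1)
  simpa using this

/-- Centralizer computation: a matrix commuting with `!![α, β*t; β, α]` (with `β ≠ 0`)
has the same shape. -/
lemma centralizer_form {t : Fq} (ht0 : t ≠ 0) {α β : Fq} (hβ : β ≠ 0)
    {N : Matrix (Fin 2) (Fin 2) Fq} (hc : N * !![α, β*t; β, α] = !![α, β*t; β, α] * N) :
    N = !![N 0 0, N 1 0 * t; N 1 0, N 0 0] := by
  have e00 : (N * !![α, β*t; β, α]) 0 0 = (!![α, β*t; β, α] * N) 0 0 := by rw [hc]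
  have e01 : (N * !![α, β*t; β, α]) 0 1 = (!![α, β*t; β, α] * N) 0 1 := by rw [hc]
  simp [Matrix.mul_apply, Fin.sum_univ_two] at e00 e01
  have h1 : N 0 1 = N 1 0 * t := by
    have h : β * (N 0 1 - N 1 0 * t) = 0 := by linear_combination e00
    exact sub_eq_zero.mp ((mul_eq_zero.1 h).resolve_left hβ)
  have h2 : N 1 1 = N 0 0 := by
    have h : β * t * (N 0 0 - N 1 1) = 0 := by linear_combination e01
    exact (sub_eq_zero.mp ((mul_eq_zero.1 h).resolve_left
      (by exact fun hh => (mul_eq_zero.1 hh).elim hβ ht0))).symm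
  conv_lhs => rw [Matrix.eta_fin_two N]
  rw [h1, h2]

/-- key conjugation lemma: if conjugation by (P,Q) carries one non-scalar torus element to
another torus element with `β' ≠ 0`, then it carries all of `Tns` into `Tns`. -/
lemma conj_Tns_subset {t : Fq} (ht0 : t ≠ 0) {P Q : Matrix (Fin 2) (Fin 2) Fq}
    (hPQ : P * Q = 1) (hQP : Q * P = 1) {α β α' β' : Fq} (hβ' : β' ≠ 0)
    (hT : P * !![α, β*t; β, α] * Q = !![α', β'*t; β', α']) :
    ∀ S ∈ Tns Fq t, P * S * Q ∈ Tns Fq t := by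
  rintro S ⟨x, y, rfl, hdet⟩
  set T : Matrix (Fin 2) (Fin 2) Fq := !![α, β*t; β, α] with hTdef
  set S : Matrix (Fin 2) (Fin 2) Fq := !![x, y*t; y, x] with hSdef
  have hST : S * T = T * S := by
    ext i j
    fin_cases i <;> fin_cases j <;>
      simp [hSdef, hTdef, Matrix.mul_apply, Fin.sum_univ_two] <;> ring
  set N : Matrix (Fin 2) (Fin 2) Fq := P * S * Q with hNdef
  have key : ∀ A B : Matrix (Fin 2) (Fin 2) Fq, (P*A*Q) * (P*B*Q) = P*(A*B)*Q := by
    intro A B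
    calc (P*A*Q)*(P*B*Q) = P*(A*(Q*P)*B)*Q := by noncomm_ring
      _ = P*(A*B)*Q := by rw [hQP, mul_one]
  have hcomm : N * !![α', β'*t; β', α'] = !![α', β'*t; β', α'] * N := by
    rw [← hT, hNdef, key, key, hST]
  have hform := centralizer_form ht0 hβ' hcomm
  have hdN : N.det = 1 := by
    have : N.det = P.det * S.det * Q.det := by rw [hNdef, Matrix.det_mul, Matrix.det_mul]
    have hPQd : P.det * Q.det = 1 := by rw [← Matrix.det_mul, hPQ, Matrix.det_one]
    have hSd : S.det = 1 := by
      rw [hSdef, Matrix.det_fin_two_of]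
      linear_combination hdet
    rw [this, hSd, mul_one]
    linear_combination hPQd
  refine ⟨N 0 0, N 1 0, hform, ?_⟩
  rw [hform] at hdN
  rw [Matrix.det_fin_two_of] at hdN
  linear_combination hdN

/-- Abstract form: if two conjugates of the non-split torus share a non-central
element, they are equal. -/
lemma conj_helper {t : Fq} (ht0 : t ≠ 0) {G Gi H Hi : Matrix (Fin 2) (Fin 2) Fq}
    (hG : Gi * G = 1) (hG' : G * Gi = 1) (hH : Hi * H = 1) (hH' : H * Hi = 1)
    {α β α' β' : Fq} (hβ : β ≠ 0) (hβ' : β' ≠ 0)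
    (heq : Gi * !![α, β*t; β, α] * G = Hi * !![α', β'*t; β', α'] * H) :
    ((fun M => Gi * M * G) '' Tns Fq t) = ((fun M => Hi * M * H) '' Tns Fq t) := by
  set P : Matrix (Fin 2) (Fin 2) Fq := H * Gi with hP
  set Q : Matrix (Fin 2) (Fin 2) Fq := G * Hi with hQ
  have hPQ : P * Q = 1 := by
    rw [hP, hQ]
    calc H * Gi * (G * Hi) = H * ((Gi * G) * Hi) := by noncomm_ring
      _ = 1 := by rw [hG, one_mul, hH']
  have hQP : Q * P = 1 := by
    rw [hP, hQ]
    calc G * Hi * (H * Gi) = G * ((Hi * H) * Gi) := by noncomm_ring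
      _ = 1 := by rw [hH, one_mul, hG']
  have hT : P * !![α, β*t; β, α] * Q = !![α', β'*t; β', α'] := by
    calc P * !![α, β*t; β, α] * Q
        = H * (Gi * !![α, β*t; β, α] * G) * Hi := by rw [hP, hQ]; noncomm_ring
      _ = H * (Hi * !![α', β'*t; β', α'] * H) * Hi := by rw [heq]
      _ = (H * Hi) * !![α', β'*t; β', α'] * (H * Hi) := by noncomm_ring
      _ = !![α', β'*t; β', α'] := by rw [hH', one_mul, mul_one]
  have hT' : Q * !![α', β'*t; β', α'] * P = !![α, β*t; β, α] := by
    calc Q * !![α', β'*t; β', α'] * P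
        = G * (Hi * !![α', β'*t; β', α'] * H) * Gi := by rw [hP, hQ]; noncomm_ring
      _ = G * (Gi * !![α, β*t; β, α] * G) * Gi := by rw [heq]
      _ = (G * Gi) * !![α, β*t; β, α] * (G * Gi) := by noncomm_ring
      _ = !![α, β*t; β, α] := by rw [hG', one_mul, mul_one]
  ext M
  constructor
  · rintro ⟨A, hA, rfl⟩
    refine ⟨P * A * Q, conj_Tns_subset ht0 hPQ hQP hβ' hT A hA, ?_⟩
    show Hi * (P * A * Q) * H = Gi * A * G
    calc Hi * (P * A * Q) * H
        = (Hi * H) * (Gi * A * G) * (Hi * H) := by rw [hP, hQ]; noncomm_ring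
      _ = Gi * A * G := by rw [hH, one_mul, mul_one]
  · rintro ⟨A, hA, rfl⟩
    refine ⟨Q * A * P, conj_Tns_subset ht0 hQP hPQ hβ hT' A hA, ?_⟩
    show Gi * (Q * A * P) * G = Hi * A * H
    calc Gi * (Q * A * P) * G
        = (Gi * G) * (Hi * A * H) * (Gi * G) := by rw [hP, hQ]; noncomm_ring
      _ = Hi * A * H := by rw [hG, one_mul, mul_one]

/-- If two conjugates of the non-split torus share a non-central element, they are equal. -/
lemma conjSet_Tns_eq {t : Fq} (ht0 : t ≠ 0) {g h : GL (Fin 2) Fq} {α β α' β' : Fq}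
    (hβ : β ≠ 0) (hβ' : β' ≠ 0)
    (heq : ((g⁻¹ : GL (Fin 2) Fq) : Matrix (Fin 2) (Fin 2) Fq) * !![α, β*t; β, α] *
        (g : Matrix (Fin 2) (Fin 2) Fq) =
      ((h⁻¹ : GL (Fin 2) Fq) : Matrix (Fin 2) (Fin 2) Fq) * !![α', β'*t; β', α'] *
        (h : Matrix (Fin 2) (Fin 2) Fq)) :
    conjSet g (Tns Fq t) = conjSet h (Tns Fq t) := by
  unfold conjSet
  exact conj_helper ht0 g.inv_mul g.mul_inv h.inv_mul h.mul_inv hβ hβ' heq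

/-- A conjugate of a central torus element is `±1`. -/
lemma conj_scalar_pm {t : Fq} {Gi G : Matrix (Fin 2) (Fin 2) Fq} (hG : Gi * G = 1)
    {α : Fq} {M : Matrix (Fin 2) (Fin 2) Fq} (hdet : α ^ 2 - t * (0:Fq) ^ 2 = 1)
    (hMg : Gi * !![α, (0:Fq)*t; 0, α] * G = M) :
    M = 1 ∨ M = -1 := by
  have hα : α = 1 ∨ α = -1 := mul_self_eq_one_iff.mp (by linear_combination hdet)
  have hM : M = α • 1 := by
    rw [← hMg, Tns_smul_one]
    simp only [mul_smul_comm, smul_mul_assoc, mul_one]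
    rw [hG]
  rcases hα with rfl | rfl
  · left; rw [hM, one_smul]
  · right; rw [hM, neg_smul, one_smul]

lemma trace_conj {Gi G : Matrix (Fin 2) (Fin 2) Fq} (hG : G * Gi = 1)
    (A : Matrix (Fin 2) (Fin 2) Fq) : Matrix.trace (Gi * A * G) = Matrix.trace A := by
  rw [Matrix.trace_mul_comm, ← mul_assoc, hG, one_mul]

/-- For `q` odd and `t` a non-square: any conjugate of the non-split
torus meets any conjugate of the Borel subgroup in `{±1}`, and two distinct conjugates
of the non-split torus meet in `{±1}`. -/
theorem nonsplit_torus_intersections (hq : Odd (Fintype.card Fq))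
    (t : Fq) (ht0 : t ≠ 0) (htns : ¬∃ s : Fq, s ^ 2 = t) :
    (∀ g h : GL (Fin 2) Fq,
      conjSet g (Tns Fq t) ∩ conjSet h (Bset Fq) =
        {(1 : Matrix (Fin 2) (Fin 2) Fq), (-1 : Matrix (Fin 2) (Fin 2) Fq)}) ∧
    (∀ g h : GL (Fin 2) Fq, conjSet g (Tns Fq t) ≠ conjSet h (Tns Fq t) →
      conjSet g (Tns Fq t) ∩ conjSet h (Tns Fq t) =
        {(1 : Matrix (Fin 2) (Fin 2) Fq), (-1 : Matrix (Fin 2) (Fin 2) Fq)}) := by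
  constructor
  · intro g h
    ext M
    simp only [Set.mem_inter_iff, Set.mem_insert_iff, Set.mem_singleton_iff]
    constructor
    · rintro ⟨⟨T, ⟨α, β, rfl, hdet⟩, hMg⟩, ⟨N, ⟨a, b, rfl⟩, hMh⟩⟩
      beta_reduce at hMg hMh
      -- trace comparison
      have htr : 2 * α = (a : Fq) + ((a⁻¹ : Fqˣ) : Fq) := by
        have h1 : Matrix.trace M = α + α := by
          rw [← hMg, trace_conj g.mul_inv, Matrix.trace_fin_two_of]
        have h2 : Matrix.trace M = (a : Fq) + ((a⁻¹ : Fqˣ) : Fq) := by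
          rw [← hMh, trace_conj h.mul_inv, Matrix.trace_fin_two_of]
        linear_combination h2 - h1
      have haa : (a : Fq) * ((a⁻¹ : Fqˣ) : Fq) = 1 := by
        rw [← Units.val_mul, mul_inv_cancel, Units.val_one]
      have hsq : ((a : Fq) - α) ^ 2 = t * β ^ 2 := by
        linear_combination (-(a : Fq)) * htr - haa + hdet
      have hβ0 : β = 0 := by
        by_contra hβ
        exact htns ⟨((a : Fq) - α) / β, by field_simp; linear_combination hsq⟩
      subst hβ0
      exact conj_scalar_pm g.inv_mul hdet hMg
    · rintro (rfl | rfl)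
      · exact ⟨one_mem_conjSet (one_mem_Tns t), one_mem_conjSet one_mem_Bset⟩
      · exact ⟨neg_one_mem_conjSet (neg_one_mem_Tns t), neg_one_mem_conjSet neg_one_mem_Bset⟩
  · intro g h hne
    ext M
    simp only [Set.mem_inter_iff, Set.mem_insert_iff, Set.mem_singleton_iff]
    constructor
    · rintro ⟨⟨T, ⟨α, β, rfl, hdet⟩, hMg⟩, ⟨T', ⟨α', β', rfl, hdet'⟩, hMh⟩⟩
      beta_reduce at hMg hMh
      by_cases hβ : β = 0
      · subst hβ
        exact conj_scalar_pm g.inv_mul hdet hMg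
      · by_cases hβ' : β' = 0
        · subst hβ'
          exact conj_scalar_pm h.inv_mul hdet' hMh
        · exact absurd (conjSet_Tns_eq ht0 hβ hβ' (hMg.trans hMh.symm)) hne
    · rintro (rfl | rfl)
      · exact ⟨one_mem_conjSet (one_mem_Tns t), one_mem_conjSet (one_mem_Tns t)⟩
      · exact ⟨neg_one_mem_conjSet (neg_one_mem_Tns t), neg_one_mem_conjSet (neg_one_mem_Tns t)⟩
end

section
/- Let q be odd, p a monic irreducible in A = F_q[T], r ≥ 1, and G = SL_2(F_q) acting on P^1(A/p^r) via reduction mod p^r and fractional linear transformations. Let S_1 = {(u:1) : u ∈ A/p^r \ F_q, (u−e)^2 = 0 for some e ∈ F_q} and S_2 = {(1:v) : 0 ≠ v ∈ A/p^r, v^2 = 0}. Then #S_1 = q(|p|^{⌊r/2⌋} − 1), #S_2 = |p|^{⌊r/2⌋} − 1, every G-orbit contained in S_1 ∪ S_2 has length (q^2−1)/2, and the number of such orbits is 2(|p|^{⌊r/2⌋} − 1)/(q−1). -/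
open Matrix Polynomial

section P1
variable (R : Type*) [CommRing R]

/-- Unimodular pairs over `R`. -/
def Unimod := {p : R × R // IsCoprime p.1 p.2}

/-- Unit-scaling relation on unimodular pairs. -/
def P1Rel : Unimod R → Unimod R → Prop := fun p q =>
  ∃ u : Rˣ, (u : R) * p.1.1 = q.1.1 ∧ (u : R) * p.1.2 = q.1.2

/-- The projective line over a commutative ring. -/
def P1 := Quot (P1Rel R)

variable {R}

/-- Class of a unimodular pair. -/
def P1.mk (p : R × R) (h : IsCoprime p.1 p.2) : P1 R := Quot.mk _ ⟨p, h⟩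

/-- Fractional-linear action of `SL₂` on unimodular pairs. -/
def actPair (g : SpecialLinearGroup (Fin 2) R) (p : Unimod R) : Unimod R :=
  ⟨((g : Matrix (Fin 2) (Fin 2) R) 0 0 * p.1.1 + (g : Matrix (Fin 2) (Fin 2) R) 0 1 * p.1.2,
    (g : Matrix (Fin 2) (Fin 2) R) 1 0 * p.1.1 + (g : Matrix (Fin 2) (Fin 2) R) 1 1 * p.1.2), by
    obtain ⟨a, b, hab⟩ := p.2
    have hdet : (g : Matrix (Fin 2) (Fin 2) R) 0 0 * (g : Matrix (Fin 2) (Fin 2) R) 1 1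
        - (g : Matrix (Fin 2) (Fin 2) R) 0 1 * (g : Matrix (Fin 2) (Fin 2) R) 1 0 = 1 := by
      have h := g.2
      rwa [Matrix.det_fin_two] at h
    exact ⟨a * (g : Matrix (Fin 2) (Fin 2) R) 1 1 - b * (g : Matrix (Fin 2) (Fin 2) R) 1 0,
      b * (g : Matrix (Fin 2) (Fin 2) R) 0 0 - a * (g : Matrix (Fin 2) (Fin 2) R) 0 1, by
      linear_combination (a * p.1.1 + b * p.1.2) * hdet + hab⟩⟩

/-- Fractional-linear action of `SL₂` on the projective line. -/
def actP1 (g : SpecialLinearGroup (Fin 2) R) : P1 R → P1 R :=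
  Quot.map (actPair g) (by
    rintro ⟨⟨u, v⟩, hc⟩ ⟨⟨u', v'⟩, hc'⟩ ⟨t, h1, h2⟩
    refine ⟨t, ?_, ?_⟩ <;> show (t : R) * _ = _ <;> dsimp [actPair]
    · linear_combination (g : Matrix (Fin 2) (Fin 2) R) 0 0 * h1
        + (g : Matrix (Fin 2) (Fin 2) R) 0 1 * h2
    · linear_combination (g : Matrix (Fin 2) (Fin 2) R) 1 0 * h1
        + (g : Matrix (Fin 2) (Fin 2) R) 1 1 * h2)

lemma actP1_one (z : P1 R) : actP1 (1 : SpecialLinearGroup (Fin 2) R) z = z := by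
  induction z using Quot.ind with
  | _ p =>
    show Quot.mk _ (actPair 1 p) = Quot.mk _ p
    congr 1
    apply Subtype.ext
    apply Prod.ext <;> simp [actPair, Matrix.one_apply]

lemma actP1_mul (g h : SpecialLinearGroup (Fin 2) R) (z : P1 R) :
    actP1 (g * h) z = actP1 g (actP1 h z) := by
  induction z using Quot.ind with
  | _ p =>
    show Quot.mk _ (actPair (g * h) p) = Quot.mk _ (actPair g (actPair h p))
    congr 1
    apply Subtype.ext
    apply Prod.ext <;>
      simp [actPair, Matrix.mul_apply, Fin.sum_univ_two] <;> ring

/-- The map on projective lines induced by a ring homomorphism. -/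
def P1map {S : Type*} [CommRing S] (f : R →+* S) : P1 R → P1 S :=
  Quot.map (fun p => ⟨(f p.1.1, f p.1.2), p.2.map f⟩) (by
    rintro ⟨⟨u, v⟩, hc⟩ ⟨⟨u', v'⟩, hc'⟩ ⟨t, h1, h2⟩
    refine ⟨Units.map (f : R →* S) t, ?_, ?_⟩ <;>
      simp only [Units.coe_map, MonoidHom.coe_coe, ← _root_.map_mul]
    · exact congrArg f h1
    · exact congrArg f h2)

/-- The stabilizer of a point of `P1 R` in a group acting through `SL₂(R)`. -/
def stabSub {G : Type*} [Group G] (φ : G →* SpecialLinearGroup (Fin 2) R) (z : P1 R) :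
    Subgroup G where
  carrier := {g | actP1 (φ g) z = z}
  one_mem' := by simp [actP1_one]
  mul_mem' := by
    intro g h hg hh
    simp only [Set.mem_setOf_eq] at *
    rw [_root_.map_mul, actP1_mul, hh, hg]
  inv_mem' := by
    intro g hg
    simp only [Set.mem_setOf_eq] at *
    conv_lhs => rw [← hg]
    rw [← actP1_mul, ← _root_.map_mul, inv_mul_cancel, _root_.map_one, actP1_one]

end P1

variable {Fq : Type*} [Field Fq] [Fintype Fq]

/-- The embedding of constants `Fq → Fq[T]/(p^r)`. -/
noncomputable def constMap (Fq : Type*) [Field Fq] (m : Polynomial Fq) :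
    Fq →+* Polynomial Fq ⧸ Ideal.span {m} :=
  (Ideal.Quotient.mk (Ideal.span {m})).comp Polynomial.C

/-- The set `S₁` of points `(u : 1)` with `u ∉ Fq` and `(u - e)² = 0` for some `e ∈ Fq`. -/
def S1set (Fq : Type*) [Field Fq] (m : Polynomial Fq) :
    Set (P1 (Polynomial Fq ⧸ Ideal.span {m})) :=
  {z | ∃ u : Polynomial Fq ⧸ Ideal.span {m},
    (¬∃ c : Fq, u = constMap Fq m c) ∧ (∃ e : Fq, (u - constMap Fq m e) ^ 2 = 0) ∧
    z = P1.mk (u, 1) isCoprime_one_right}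

/-- The set `S₂` of points `(1 : v)` with `v ≠ 0` and `v² = 0`. -/
def S2set (Fq : Type*) [Field Fq] (m : Polynomial Fq) :
    Set (P1 (Polynomial Fq ⧸ Ideal.span {m})) :=
  {z | ∃ v : Polynomial Fq ⧸ Ideal.span {m}, v ≠ 0 ∧ v ^ 2 = 0 ∧
    z = P1.mk (1, v) isCoprime_one_left}

/-!
Every point of `S₁ ∪ S₂` is a point of `P¹(F_q)` moved by a nonzero square-zero `v`:
`(1 : v)` near `∞`, or `(e + v : 1)` near `e`, and the latter is the image of `(1 : -v)` under
`(e -1; 1 0)`. A direct computation shows that the `SL₂(F_q)`-orbit of `(1 : v)` is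
`{(1 : s v)} ∪ {(e - s v : 1)}`, with `e ∈ F_q` and `s` running over the `(q - 1)/2` nonzero
squares, so every orbit has `(q + 1)(q - 1)/2` points and the number of orbits is
`#(S₁ ∪ S₂) = (q + 1) #{v ≠ 0 : v² = 0}` divided by that. Finally, the square-zero
elements of `A/p^r` are the multiples of `p^⌈r/2⌉`, a copy of `A/p^⌊r/2⌋`.
-/

namespace P1

variable {R : Type*} [CommRing R]

lemma rel_equivalence : Equivalence (P1Rel R) where
  refl _ := ⟨1, one_mul _, one_mul _⟩
  symm := by
    rintro p q ⟨u, h1, h2⟩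
    exact ⟨u⁻¹, by rw [← h1, Units.inv_mul_cancel_left],
      by rw [← h2, Units.inv_mul_cancel_left]⟩
  trans := by
    rintro p q r ⟨u, h1, h2⟩ ⟨t, h3, h4⟩
    exact ⟨t * u, by rw [Units.val_mul, mul_assoc, h1, h3],
      by rw [Units.val_mul, mul_assoc, h2, h4]⟩

lemma mk_eq_mk_iff {p q : R × R} {hp : IsCoprime p.1 p.2} {hq : IsCoprime q.1 q.2} :
    P1.mk p hp = P1.mk q hq ↔ ∃ u : Rˣ, (u : R) * p.1 = q.1 ∧ (u : R) * p.2 = q.2 :=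
  Quot.eq.trans rel_equivalence.eqvGen_iff

lemma mk_eq_mk_of_mul_eq_one {p q : R × R} (hp : IsCoprime p.1 p.2) (hq : IsCoprime q.1 q.2)
    {t t' : R} (ht : t * t' = 1) (h1 : t * p.1 = q.1) (h2 : t * p.2 = q.2) :
    P1.mk p hp = P1.mk q hq :=
  mk_eq_mk_iff.2 ⟨Units.mkOfMulEqOne t t' ht, h1, h2⟩

lemma mk_congr {p q : R × R} (h : p = q) (hp : IsCoprime p.1 p.2) (hq : IsCoprime q.1 q.2) :
    P1.mk p hp = P1.mk q hq := by
  subst h; rfl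

lemma mk_one_right_inj {u u' : R} :
    P1.mk (u, 1) isCoprime_one_right = P1.mk (u', 1) isCoprime_one_right ↔ u = u' := by
  refine ⟨fun h => ?_, fun h => mk_congr (by rw [h]) _ _⟩
  obtain ⟨t, h1, h2⟩ := mk_eq_mk_iff.1 h
  simp only [mul_one] at h1 h2
  rw [← h1, h2, one_mul]

lemma mk_one_left_inj {v v' : R} :
    P1.mk (1, v) isCoprime_one_left = P1.mk (1, v') isCoprime_one_left ↔ v = v' := by
  refine ⟨fun h => ?_, fun h => mk_congr (by rw [h]) _ _⟩
  obtain ⟨t, h1, h2⟩ := mk_eq_mk_iff.1 h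
  simp only [mul_one] at h1 h2
  rw [← h2, h1, one_mul]

lemma mk_one_left_ne_mk_one_right {v : R} (hv : v ^ 2 = 0) (hv0 : v ≠ 0) (u : R) :
    P1.mk (1, v) isCoprime_one_left ≠ P1.mk (u, 1) isCoprime_one_right := by
  intro h
  obtain ⟨t, h1, h2⟩ := mk_eq_mk_iff.1 h
  simp only [mul_one] at h1 h2
  apply hv0
  calc v = v * ((t : R) * v) := by rw [h2, mul_one]
    _ = t * v ^ 2 := by ring
    _ = 0 := by rw [hv, mul_zero]

instance [Finite R] : Finite (Unimod R) := Subtype.finite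

instance [Finite R] : Finite (P1 R) := Quot.finite _

end P1

namespace RingHom

variable {K R : Type*} [Field K] [CommRing R] (f : K →+* R)

lemma map_eq_zero_of_isNilpotent {c : K} (h : IsNilpotent (f c)) : f c = 0 := by
  rcases eq_or_ne c 0 with rfl | hc
  · exact map_zero f
  obtain ⟨n, hn⟩ := h
  have h01 : (0 : R) = 1 := isUnit_zero_iff.1 (hn ▸ ((Ne.isUnit hc).map f).pow n)
  have := subsingleton_of_zero_eq_one h01
  exact Subsingleton.elim _ _

lemma map_mul_eq_zero_iff {c : K} (hc : c ≠ 0) {v : R} : f c * v = 0 ↔ v = 0 :=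
  ((Ne.isUnit hc).map f).mul_right_eq_zero

lemma map_mul_eq_map_mul_iff {v : R} (hv0 : v ≠ 0) {c c' : K} :
    f c * v = f c' * v ↔ c = c' := by
  refine ⟨fun h => by_contra fun hne => hv0 ?_, fun h => by rw [h]⟩
  rw [← f.map_mul_eq_zero_iff (sub_ne_zero.2 hne), map_sub, sub_mul, h, sub_self]

lemma map_add_eq_map_add_iff {e e' : K} {v w : R} (hv : v ^ 2 = 0) (hw : w ^ 2 = 0) :
    f e + v = f e' + w ↔ f e = f e' ∧ v = w := by
  refine ⟨fun h => ?_, fun ⟨he, hvw⟩ => by rw [he, hvw]⟩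
  have hsub : f (e - e') = w - v := by rw [map_sub]; linear_combination h
  have hzero : f (e - e') = 0 := f.map_eq_zero_of_isNilpotent
    ⟨3, by rw [hsub]; linear_combination (w - 3 * v) * hw + (3 * w - v) * hv⟩
  rw [map_sub, sub_eq_zero] at hzero
  exact ⟨hzero, by linear_combination h - hzero⟩

lemma map_det_fin_two (g : SpecialLinearGroup (Fin 2) K) :
    f (g 0 0) * f (g 1 1) - f (g 0 1) * f (g 1 0) = 1 := by
  rw [← map_mul, ← map_mul, ← map_sub, ← det_fin_two, g.det_coe, map_one]

end RingHom

section Action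

variable {K R : Type*} [Field K] [CommRing R] (f : K →+* R)

lemma actP1_map_mk_eq (g : SpecialLinearGroup (Fin 2) K) {x y x' y' t t' : R}
    (h : IsCoprime x y) (h' : IsCoprime x' y') (ht : t * t' = 1)
    (hx : t * (f (g 0 0) * x + f (g 0 1) * y) = x')
    (hy : t * (f (g 1 0) * x + f (g 1 1) * y) = y') :
    actP1 (SpecialLinearGroup.map f g) (P1.mk (x, y) h) = P1.mk (x', y') h' :=
  P1.mk_eq_mk_of_mul_eq_one _ h' ht hx hy

def orbitSL (z : P1 R) : Set (P1 R) :=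
  {w | ∃ g : SpecialLinearGroup (Fin 2) K, actP1 (SpecialLinearGroup.map f g) z = w}

variable {f}

lemma actP1_mk_one_of_lower_left_eq_zero {g : SpecialLinearGroup (Fin 2) K} (hc : g 1 0 = 0)
    {v : R} (hv : v ^ 2 = 0) :
    actP1 (SpecialLinearGroup.map f g) (P1.mk (1, v) isCoprime_one_left) =
      P1.mk (1, f (g 1 1 ^ 2) * v) isCoprime_one_left := by
  have had := f.map_det_fin_two g
  simp only [hc, map_zero, mul_zero, sub_zero] at had
  refine actP1_map_mk_eq f g _ _ (t := f (g 1 1) - f (g 1 1) ^ 2 * f (g 0 1) * v)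
    (t' := f (g 0 0) + f (g 0 1) * v) ?_ ?_ ?_
  · linear_combination (1 - f (g 1 1) * f (g 0 1) * v) * had - f (g 1 1) ^ 2 * f (g 0 1) ^ 2 * hv
  · linear_combination (1 - f (g 1 1) * f (g 0 1) * v) * had - f (g 1 1) ^ 2 * f (g 0 1) ^ 2 * hv
  · rw [hc, map_zero, map_pow]
    linear_combination -f (g 1 1) ^ 3 * f (g 0 1) * hv

lemma actP1_mk_one_of_lower_left_ne_zero {g : SpecialLinearGroup (Fin 2) K} (hc : g 1 0 ≠ 0)
    {v : R} (hv : v ^ 2 = 0) :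
    actP1 (SpecialLinearGroup.map f g) (P1.mk (1, v) isCoprime_one_left) =
      P1.mk (f (g 0 0 * (g 1 0)⁻¹) - f ((g 1 0)⁻¹ ^ 2) * v, 1) isCoprime_one_right := by
  have hdet := f.map_det_fin_two g
  have hci : f (g 1 0) * f (g 1 0)⁻¹ = 1 := by rw [← map_mul, mul_inv_cancel₀ hc, map_one]
  refine actP1_map_mk_eq f g _ _ (t := f (g 1 0)⁻¹ - f (g 1 1) * f (g 1 0)⁻¹ ^ 2 * v)
    (t' := f (g 1 0) + f (g 1 1) * v) ?_ ?_ ?_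
  · linear_combination (1 - f (g 1 1) * f (g 1 0)⁻¹ * v) * hci
      - f (g 1 1) ^ 2 * f (g 1 0)⁻¹ ^ 2 * hv
  · rw [map_mul, map_pow]
    linear_combination (-f (g 1 0)⁻¹ ^ 2 * v) * hdet + (-f (g 0 1) * f (g 1 0)⁻¹ * v) * hci
      - f (g 0 1) * f (g 1 1) * f (g 1 0)⁻¹ ^ 2 * hv
  · linear_combination (1 - f (g 1 1) * f (g 1 0)⁻¹ * v) * hci
      - f (g 1 1) ^ 2 * f (g 1 0)⁻¹ ^ 2 * hv

lemma mem_orbitSL_self (z : P1 R) : z ∈ orbitSL f z :=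
  ⟨1, by rw [map_one, actP1_one]⟩

lemma orbitSL_actP1 (g : SpecialLinearGroup (Fin 2) K) (z : P1 R) :
    orbitSL f (actP1 (SpecialLinearGroup.map f g) z) = orbitSL f z := by
  ext w
  constructor
  · rintro ⟨h, rfl⟩
    exact ⟨h * g, by rw [map_mul, actP1_mul]⟩
  · rintro ⟨h, rfl⟩
    exact ⟨h * g⁻¹, by rw [← actP1_mul, ← map_mul, inv_mul_cancel_right]⟩

lemma orbitSL_eq_of_mem {z w : P1 R} (h : w ∈ orbitSL f z) : orbitSL f w = orbitSL f z := by
  obtain ⟨g, rfl⟩ := h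
  exact orbitSL_actP1 g z

lemma equivalence_mem_orbitSL : Equivalence fun z w : P1 R => w ∈ orbitSL f z where
  refl := mem_orbitSL_self
  symm h := orbitSL_eq_of_mem h ▸ mem_orbitSL_self _
  trans h h' := orbitSL_eq_of_mem h ▸ h'

variable (K) in
abbrev unitSquares : Subgroup Kˣ := (powMonoidHom 2 : Kˣ →* Kˣ).range

variable (f) in
def tangentParam (v : R) : unitSquares K ⊕ K × unitSquares K → P1 R :=
  Sum.elim (fun s => P1.mk (1, f (s : Kˣ) * v) isCoprime_one_left)
    (fun p => P1.mk (f p.1 - f (p.2 : Kˣ) * v, 1) isCoprime_one_right)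

lemma orbitSL_mk_one {v : R} (hv : v ^ 2 = 0) :
    orbitSL f (P1.mk (1, v) isCoprime_one_left) = Set.range (tangentParam f v) := by
  ext z
  constructor
  · rintro ⟨g, rfl⟩
    by_cases hc : g 1 0 = 0
    · have hd : g 1 1 ≠ 0 := by
        intro hd
        simpa [hc, hd] using (RingHom.id K).map_det_fin_two g
      rw [actP1_mk_one_of_lower_left_eq_zero hc hv]
      exact ⟨Sum.inl ⟨Units.mk0 _ hd ^ 2, Units.mk0 _ hd, rfl⟩, by simp [tangentParam]⟩
    · rw [actP1_mk_one_of_lower_left_ne_zero hc hv]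
      exact ⟨Sum.inr (g 0 0 * (g 1 0)⁻¹, ⟨Units.mk0 _ (inv_ne_zero hc) ^ 2, _, rfl⟩),
        by simp [tangentParam]⟩
  · rintro ⟨⟨s, x, rfl⟩ | ⟨e, s, x, rfl⟩, rfl⟩
    · let g : SpecialLinearGroup (Fin 2) K := ⟨!![(x : K)⁻¹, 0; 0, x], by simp⟩
      refine ⟨g, (actP1_mk_one_of_lower_left_eq_zero (by simp [g]) hv).trans ?_⟩
      simp [g, tangentParam]
    · let g : SpecialLinearGroup (Fin 2) K :=
        ⟨!![e * (x : K)⁻¹, -x; (x : K)⁻¹, 0], by simp⟩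
      refine ⟨g, (actP1_mk_one_of_lower_left_ne_zero (by simp [g]) hv).trans ?_⟩
      simp [g, tangentParam]

lemma tangentParam_injective {v : R} (hv0 : v ≠ 0) (hv : v ^ 2 = 0) :
    Function.Injective (tangentParam f v) := by
  have : Nontrivial R := nontrivial_of_ne v 0 hv0
  have hsv (s : unitSquares K) : (f (s : Kˣ) * v) ^ 2 = 0 := by rw [mul_pow, hv, mul_zero]
  have hsv0 (s : unitSquares K) : f (s : Kˣ) * v ≠ 0 :=
    (f.map_mul_eq_zero_iff (s : Kˣ).ne_zero).not.2 hv0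
  rintro (s | ⟨e, s⟩) (s' | ⟨e', s'⟩) h <;>
    simp only [tangentParam, Sum.elim_inl, Sum.elim_inr] at h
  · rw [P1.mk_one_left_inj, f.map_mul_eq_map_mul_iff hv0, Units.val_inj, SetLike.coe_eq_coe] at h
    rw [h]
  · exact absurd h (P1.mk_one_left_ne_mk_one_right (hsv s) (hsv0 s) _)
  · exact absurd h.symm (P1.mk_one_left_ne_mk_one_right (hsv s') (hsv0 s') _)
  · rw [P1.mk_one_right_inj, sub_eq_add_neg, sub_eq_add_neg,
      f.map_add_eq_map_add_iff (by rw [neg_sq, hsv]) (by rw [neg_sq, hsv]), neg_inj,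
      f.map_mul_eq_map_mul_iff hv0, Units.val_inj, SetLike.coe_eq_coe, f.injective.eq_iff] at h
    rw [h.1, h.2]

lemma natCard_range_tangentParam [Finite K] {v : R} (hv0 : v ≠ 0) (hv : v ^ 2 = 0) :
    Nat.card (Set.range (tangentParam f v)) = (Nat.card K + 1) * Nat.card (unitSquares K) := by
  rw [Nat.card_range_of_injective (tangentParam_injective hv0 hv), Nat.card_sum, Nat.card_prod]
  ring

lemma two_mul_natCard_unitSquares [Finite K] (hK : Odd (Nat.card K)) :
    2 * Nat.card (unitSquares K) = Nat.card K - 1 := by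
  have h2 : 2 ∣ Nat.card Kˣ := by
    rw [Nat.card_units]
    exact (Nat.Odd.sub_odd hK odd_one).two_dvd
  rw [IsCyclic.card_powMonoidHom_range, Nat.gcd_eq_right h2, Nat.mul_div_cancel' h2,
    Nat.card_units]

end Action

lemma natCard_quot_mul_eq_natCard {α : Type*} [Finite α] {r : α → α → Prop}
    (hr : Equivalence r) {k : ℕ} (hk : ∀ a, Nat.card {b // r a b} = k) :
    Nat.card (Quot r) * k = Nat.card α := by
  have := Fintype.ofFinite α
  have := Fintype.ofFinite (Quot r)
  have hfiber (c : Quot r) : Nat.card {a // Quot.mk r a = c} = k := by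
    induction c using Quot.ind with
    | _ b =>
      rw [← hk b]
      exact Nat.card_congr <| Equiv.subtypeEquivRight fun a =>
        Quot.eq.trans (hr.eqvGen_iff.trans ⟨hr.symm, hr.symm⟩)
  rw [← Nat.card_congr (Equiv.sigmaFiberEquiv (Quot.mk r)), Nat.card_sigma,
    Finset.sum_congr rfl fun c _ => hfiber c, Finset.sum_const, smul_eq_mul, Finset.card_univ,
    Nat.card_eq_fintype_card]

section SquareZero

lemma pow_dvd_of_pow_dvd_sq {A : Type*} [CommMonoidWithZero A] [IsCancelMulZero A] {p g : A}
    (hp : Prime p) {r : ℕ} (h : p ^ r ∣ g ^ 2) : p ^ (r - r / 2) ∣ g := by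
  rw [pow_dvd_iff_le_emultiplicity, emultiplicity_pow hp] at h
  rw [pow_dvd_iff_le_emultiplicity]
  cases hg : emultiplicity p g with
  | top => exact le_top
  | coe n =>
    rw [hg] at h
    norm_cast at h ⊢
    omega

/-- Multiplication by `p ^ ⌈r/2⌉` identifies `A/(p^⌊r/2⌋)` with the square-zero elements of
`A/(p^r)`. -/
lemma natCard_sq_eq_zero_eq_natCard_quotient {A : Type*} [CommRing A] [IsDomain A] {p : A}
    (hp : Prime p) (r : ℕ) :
    Nat.card {v : A ⧸ Ideal.span {p ^ r} | v ^ 2 = 0} =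
      Nat.card (A ⧸ Ideal.span {p ^ (r / 2)}) := by
  set I := Ideal.span {p ^ r}
  let L : A →ₗ[A] A ⧸ I := I.mkQ ∘ₗ LinearMap.mulLeft A (p ^ (r - r / 2))
  have hL (a : A) : L a = Ideal.Quotient.mk I (p ^ (r - r / 2) * a) := rfl
  have hker : LinearMap.ker L = Ideal.span {p ^ (r / 2)} := by
    have hr : p ^ r = p ^ (r - r / 2) * p ^ (r / 2) := by
      rw [← pow_add, Nat.sub_add_cancel (Nat.div_le_self r 2)]
    ext a
    rw [LinearMap.mem_ker, hL, Ideal.Quotient.eq_zero_iff_mem, Ideal.mem_span_singleton,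
      Ideal.mem_span_singleton, hr, mul_dvd_mul_iff_left (pow_ne_zero _ hp.ne_zero)]
  have hrange : (LinearMap.range L : Set (A ⧸ I)) = {v | v ^ 2 = 0} := by
    ext v
    constructor
    · rintro ⟨a, rfl⟩
      rw [Set.mem_ofPred_eq, hL, ← map_pow, Ideal.Quotient.eq_zero_iff_mem,
        Ideal.mem_span_singleton]
      exact (pow_dvd_pow p (by omega : r ≤ 2 * (r - r / 2))).trans ⟨a ^ 2, by ring⟩
    · intro hv
      obtain ⟨g, rfl⟩ := Ideal.Quotient.mk_surjective v
      rw [Set.mem_ofPred_eq, ← map_pow, Ideal.Quotient.eq_zero_iff_mem,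
        Ideal.mem_span_singleton] at hv
      obtain ⟨a, ha⟩ := pow_dvd_of_pow_dvd_sq hp hv
      exact ⟨a, by rw [hL, ha]⟩
  rw [← hker, Nat.card_congr (LinearMap.quotKerEquivRange L).toEquiv, ← hrange]
  rfl

lemma finite_quotient_span {K : Type*} [Field K] [Finite K] {f : K[X]} (hf : f ≠ 0) :
    Finite (K[X] ⧸ Ideal.span {f}) :=
  have : Module.Finite K (K[X] ⧸ Ideal.span {f}) := (AdjoinRoot.powerBasis hf).finite
  Module.finite_of_finite K

lemma natCard_quotient_span_eq_pow_natDegree {K : Type*} [Field K] {f : K[X]} (hf : f ≠ 0) :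
    Nat.card (K[X] ⧸ Ideal.span {f}) = Nat.card K ^ f.natDegree := by
  have : Module.Finite K (K[X] ⧸ Ideal.span {f}) := (AdjoinRoot.powerBasis hf).finite
  rw [Module.natCard_eq_pow_finrank (K := K), finrank_quotient_span_eq_natDegree]

abbrev nonzeroSqZero (R : Type*) [CommRing R] : Set R := {v | v ≠ 0 ∧ v ^ 2 = 0}

lemma natCard_nonzeroSqZero (R : Type*) [CommRing R] [Finite R] :
    Nat.card (nonzeroSqZero R) = Nat.card {v : R | v ^ 2 = 0} - 1 := by
  have h : nonzeroSqZero R = {v : R | v ^ 2 = 0} \ {0} := by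
    ext v
    simp [and_comm]
  rw [Nat.card_coe_set_eq, Nat.card_coe_set_eq, h,
    Set.ncard_sdiff_singleton_of_mem (by simp)]

lemma natCard_nonzeroSqZero_quotient_pow {K : Type*} [Field K] [Finite K] {p : K[X]}
    (hp : Irreducible p) (r : ℕ) :
    Nat.card (nonzeroSqZero (K[X] ⧸ Ideal.span {p ^ r})) =
      Nat.card K ^ (p.natDegree * (r / 2)) - 1 := by
  have := finite_quotient_span (pow_ne_zero r hp.ne_zero)
  rw [natCard_nonzeroSqZero, natCard_sq_eq_zero_eq_natCard_quotient hp.prime,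
    natCard_quotient_span_eq_pow_natDegree (pow_ne_zero _ hp.ne_zero), natDegree_pow, mul_comm]

end SquareZero

section TangentPoints

variable {K : Type*} [Field K] (m : K[X])

lemma S2set_eq_range : S2set K m =
    Set.range fun v : nonzeroSqZero (K[X] ⧸ Ideal.span {m}) =>
      P1.mk (1, (v : K[X] ⧸ Ideal.span {m})) isCoprime_one_left := by
  ext z
  constructor
  · rintro ⟨v, hv0, hv, rfl⟩
    exact ⟨⟨v, hv0, hv⟩, rfl⟩
  · rintro ⟨⟨v, hv0, hv⟩, rfl⟩
    exact ⟨v, hv0, hv, rfl⟩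

lemma S1set_eq_range : S1set K m =
    Set.range fun p : K × nonzeroSqZero (K[X] ⧸ Ideal.span {m}) =>
      P1.mk (constMap K m p.1 + p.2, 1) isCoprime_one_right := by
  ext z
  constructor
  · rintro ⟨u, hu, ⟨e, he⟩, rfl⟩
    refine ⟨(e, ⟨u - constMap K m e, fun h => hu ⟨e, sub_eq_zero.1 h⟩, he⟩), ?_⟩
    exact P1.mk_congr (by simp) _ _
  · rintro ⟨⟨e, v, hv0, hv⟩, rfl⟩
    refine ⟨constMap K m e + v, ?_, ⟨e, by rwa [add_sub_cancel_left]⟩, rfl⟩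
    rintro ⟨c, hc⟩
    have hvc : v = constMap K m (c - e) := by rw [map_sub, ← hc, add_sub_cancel_left]
    exact hv0 (hvc.trans ((constMap K m).map_eq_zero_of_isNilpotent ⟨2, hvc ▸ hv⟩))

lemma natCard_S2set : Nat.card (S2set K m) = Nat.card (nonzeroSqZero (K[X] ⧸ Ideal.span {m})) :=
  (S2set_eq_range m).symm ▸
    Nat.card_range_of_injective fun _ _ h => Subtype.ext (P1.mk_one_left_inj.1 h)

lemma natCard_S1set :
    Nat.card (S1set K m) = Nat.card K * Nat.card (nonzeroSqZero (K[X] ⧸ Ideal.span {m})) := by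
  rw [S1set_eq_range, Nat.card_range_of_injective, Nat.card_prod]
  intro ⟨e, v, hv0, hv⟩ ⟨e', v', _, hv'⟩ h
  have : Nontrivial (K[X] ⧸ Ideal.span {m}) := nontrivial_of_ne v 0 hv0
  rw [P1.mk_one_right_inj, RingHom.map_add_eq_map_add_iff _ hv hv',
    (constMap K m).injective.eq_iff] at h
  obtain ⟨rfl, rfl⟩ := h
  rfl

lemma disjoint_S1set_S2set : Disjoint (S1set K m) (S2set K m) := by
  rw [S1set_eq_range, S2set_eq_range, Set.disjoint_left]
  rintro _ ⟨p, rfl⟩ ⟨⟨v, hv0, hv⟩, h⟩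
  exact P1.mk_one_left_ne_mk_one_right hv hv0 _ h

lemma exists_orbitSL_eq_range_tangentParam {z : P1 (K[X] ⧸ Ideal.span {m})}
    (hz : z ∈ S1set K m ∪ S2set K m) : ∃ v ∈ nonzeroSqZero (K[X] ⧸ Ideal.span {m}),
      orbitSL (constMap K m) z = Set.range (tangentParam (constMap K m) v) := by
  rw [S1set_eq_range, S2set_eq_range] at hz
  rcases hz with ⟨⟨e, v, hv0, hv⟩, rfl⟩ | ⟨⟨v, hv0, hv⟩, rfl⟩
  · have hv' : (-v) ^ 2 = 0 := by linear_combination hv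
    let g : SpecialLinearGroup (Fin 2) K := ⟨!![e, -1; 1, 0], by simp⟩
    have hz : P1.mk (constMap K m e + v, 1) isCoprime_one_right =
        actP1 (SpecialLinearGroup.map (constMap K m) g) (P1.mk (1, -v) isCoprime_one_left) := by
      rw [actP1_mk_one_of_lower_left_ne_zero (by simp [g]) hv']
      exact P1.mk_congr (by simp [g]) _ _
    refine ⟨-v, ⟨neg_ne_zero.2 hv0, hv'⟩, ?_⟩
    dsimp only
    rw [hz, orbitSL_actP1, orbitSL_mk_one hv']
  · exact ⟨v, ⟨hv0, hv⟩, orbitSL_mk_one hv⟩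

lemma range_tangentParam_subset {v : K[X] ⧸ Ideal.span {m}}
    (hv : v ∈ nonzeroSqZero (K[X] ⧸ Ideal.span {m})) :
    Set.range (tangentParam (constMap K m) v) ⊆ S1set K m ∪ S2set K m := by
  obtain ⟨hv0, hv⟩ := hv
  have hsv (s : unitSquares K) : (constMap K m (s : Kˣ) * v) ^ 2 = 0 := by
    rw [mul_pow, hv, mul_zero]
  have hsv0 (s : unitSquares K) : constMap K m (s : Kˣ) * v ≠ 0 :=
    ((constMap K m).map_mul_eq_zero_iff (s : Kˣ).ne_zero).not.2 hv0
  rw [S1set_eq_range, S2set_eq_range]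
  rintro _ ⟨s | ⟨e, s⟩, rfl⟩
  · exact Or.inr ⟨⟨_, hsv0 s, hsv s⟩, rfl⟩
  · refine Or.inl ⟨(e, ⟨_, neg_ne_zero.2 (hsv0 s), by linear_combination hsv s⟩), ?_⟩
    exact P1.mk_congr (by simp [sub_eq_add_neg]) _ _

lemma orbitSL_subset_S1set_union_S2set {z : P1 (K[X] ⧸ Ideal.span {m})}
    (hz : z ∈ S1set K m ∪ S2set K m) :
    orbitSL (constMap K m) z ⊆ S1set K m ∪ S2set K m := by
  obtain ⟨v, hv, heq⟩ := exists_orbitSL_eq_range_tangentParam m hz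
  exact heq ▸ range_tangentParam_subset m hv

lemma natCard_orbitSL [Finite K] {z : P1 (K[X] ⧸ Ideal.span {m})}
    (hz : z ∈ S1set K m ∪ S2set K m) :
    Nat.card (orbitSL (constMap K m) z) = (Nat.card K + 1) * Nat.card (unitSquares K) := by
  obtain ⟨v, hv, heq⟩ := exists_orbitSL_eq_range_tangentParam m hz
  rw [heq, natCard_range_tangentParam hv.1 hv.2]

lemma natCard_quot_orbitSL_mul [Finite K] (hm : m ≠ 0) :
    Nat.card (Quot fun z w : ↥(S1set K m ∪ S2set K m) => w.1 ∈ orbitSL (constMap K m) z.1) *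
        ((Nat.card K + 1) * Nat.card (unitSquares K)) =
      (Nat.card K + 1) * Nat.card (nonzeroSqZero (K[X] ⧸ Ideal.span {m})) := by
  have := finite_quotient_span hm
  rw [natCard_quot_mul_eq_natCard (equivalence_mem_orbitSL.comap Subtype.val) fun z =>
      (Nat.card_congr (Equiv.subtypeSubtypeEquivSubtype fun hw =>
        orbitSL_subset_S1set_union_S2set m z.2 hw)).trans (natCard_orbitSL m z.2),
    Nat.card_coe_set_eq, Set.ncard_union_eq (disjoint_S1set_S2set m), ← Nat.card_coe_set_eq,
    ← Nat.card_coe_set_eq, natCard_S1set, natCard_S2set]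
  ring

end TangentPoints

lemma sq_sub_one_div_two_eq_mul {q k : ℕ} (hq : Odd q) (hk : 2 * k = q - 1) :
    (q ^ 2 - 1) / 2 = (q + 1) * k := by
  obtain ⟨j, rfl⟩ := hq
  obtain rfl : k = j := by omega
  rw [show (2 * k + 1) ^ 2 = 2 * ((2 * k + 1 + 1) * k) + 1 by ring, Nat.add_sub_cancel,
    Nat.mul_div_cancel_left _ two_pos]

lemma eq_two_mul_div_of_mul_eq_mul {q k n N : ℕ} (hq : 1 < q) (hk : 2 * k = q - 1)
    (h : N * ((q + 1) * k) = (q + 1) * n) : N = 2 * n / (q - 1) := by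
  rw [← hk, eq_comm]
  refine Nat.div_eq_of_eq_mul_left (by omega) (Nat.eq_of_mul_eq_mul_left (by omega : 0 < q + 1) ?_)
  linear_combination 2 * h.symm

theorem S1_S2_orbits_general (p : Polynomial Fq) (hp : Irreducible p)
    (r : ℕ) (hq : Odd (Fintype.card Fq)) :
    Nat.card (S1set Fq (p ^ r)) =
      Fintype.card Fq * ((Fintype.card Fq) ^ (p.natDegree * (r / 2)) - 1) ∧
    Nat.card (S2set Fq (p ^ r)) = (Fintype.card Fq) ^ (p.natDegree * (r / 2)) - 1 ∧
    (∀ z ∈ S1set Fq (p ^ r) ∪ S2set Fq (p ^ r),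
      Nat.card {w : P1 (Polynomial Fq ⧸ Ideal.span {p ^ r}) |
          ∃ g : SpecialLinearGroup (Fin 2) Fq,
            actP1 (SpecialLinearGroup.map (constMap Fq (p ^ r)) g) z = w} =
        ((Fintype.card Fq) ^ 2 - 1) / 2) ∧
    Nat.card (Quot (fun z w : ↥(S1set Fq (p ^ r) ∪ S2set Fq (p ^ r)) =>
        ∃ g : SpecialLinearGroup (Fin 2) Fq,
          actP1 (SpecialLinearGroup.map (constMap Fq (p ^ r)) g) z.1 = w.1)) =
      2 * ((Fintype.card Fq) ^ (p.natDegree * (r / 2)) - 1) / (Fintype.card Fq - 1) := by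
  rw [← Nat.card_eq_fintype_card] at hq ⊢
  have hN := natCard_nonzeroSqZero_quotient_pow (K := Fq) hp r
  have hk := two_mul_natCard_unitSquares hq
  refine ⟨by rw [natCard_S1set, hN], by rw [natCard_S2set, hN], fun z hz => ?_, ?_⟩
  · exact (natCard_orbitSL _ hz).trans (sq_sub_one_div_two_eq_mul hq hk).symm
  · have hcount := natCard_quot_orbitSL_mul (p ^ r) (pow_ne_zero r hp.ne_zero)
    rw [hN] at hcount
    exact eq_two_mul_div_of_mul_eq_mul Finite.one_lt_card hk hcount

/-- Cardinalities of `S₁`, `S₂`, and the structure of the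
`SL₂(Fq)`-orbits contained in `S₁ ∪ S₂`. -/
theorem S1_S2_orbits (p : Polynomial Fq) (hp : Irreducible p) (hmon : p.Monic)
    (r : ℕ) (hr : 1 ≤ r) (hq : Odd (Fintype.card Fq)) :
    Nat.card (S1set Fq (p ^ r)) =
      Fintype.card Fq * ((Fintype.card Fq) ^ (p.natDegree * (r / 2)) - 1) ∧
    Nat.card (S2set Fq (p ^ r)) = (Fintype.card Fq) ^ (p.natDegree * (r / 2)) - 1 ∧
    (∀ z ∈ S1set Fq (p ^ r) ∪ S2set Fq (p ^ r),
      Nat.card {w : P1 (Polynomial Fq ⧸ Ideal.span {p ^ r}) |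
          ∃ g : SpecialLinearGroup (Fin 2) Fq,
            actP1 (SpecialLinearGroup.map (constMap Fq (p ^ r)) g) z = w} =
        ((Fintype.card Fq) ^ 2 - 1) / 2) ∧
    Nat.card (Quot (fun z w : ↥(S1set Fq (p ^ r) ∪ S2set Fq (p ^ r)) =>
        ∃ g : SpecialLinearGroup (Fin 2) Fq,
          actP1 (SpecialLinearGroup.map (constMap Fq (p ^ r)) g) z.1 = w.1)) =
      2 * ((Fintype.card Fq) ^ (p.natDegree * (r / 2)) - 1) / (Fintype.card Fq - 1) :=
  S1_S2_orbits_general p hp r hq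
end

section
/- Let q be odd, G = SL_2(F_q), n = p_1^{r_1}···p_s^{r_s} ∈ A = F_q[T] with distinct monic irreducible factors, and let G act diagonally on P^1(A/n) ≅ ∏_i P^1(A/p_i^{r_i}). Suppose z = (z_1,…,z_s) satisfies: there is a nontrivial partition S ⊔ S' = {1,…,s} and distinct points u ≠ v in P^1(F_q) with z_i = u for i ∈ S and z_i = v for i ∈ S'. Then Stab_G(z) is isomorphic to F_q^× (the diagonal torus), the G-orbit of z has length q(q+1), and the total number of such G-orbits is 2^{s−1} − 1. -/
open Matrix Polynomial

variable {Fq : Type*} [Field Fq] [Fintype Fq]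

/-- A tuple `z ∈ ∏ᵢ P¹(A/pᵢ^{rᵢ})` is of "split rational type": there is a nontrivial
partition `S ⊔ Sᶜ` of the factors and distinct `u ≠ v ∈ P¹(Fq)` with `zᵢ = u` on `S`
and `zᵢ = v` on `Sᶜ`. -/
def SplitRational {s : ℕ} (p : Fin s → Polynomial Fq) (r : Fin s → ℕ)
    (z : ∀ i, P1 (Polynomial Fq ⧸ Ideal.span {p i ^ r i})) : Prop :=
  ∃ S : Set (Fin s), S.Nonempty ∧ Sᶜ.Nonempty ∧
    ∃ u v : P1 Fq, u ≠ v ∧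
      (∀ i ∈ S, z i = P1map (constMap Fq (p i ^ r i)) u) ∧
      (∀ i ∈ Sᶜ, z i = P1map (constMap Fq (p i ^ r i)) v)


/-!
Reduction modulo `pᵢ ^ rᵢ` is injective on `P¹(F_q)`, since a nonunit cannot divide a nonzero
constant. Hence a split rational point is determined by the partition `S ⊔ Sᶜ` together with the
ordered pair `(u, v)`, and `g` sends it to the point with data `(S, g u, g v)`. Its stabilizer is
therefore the pointwise stabilizer of `{u, v}`, a conjugate of the diagonal torus `≅ F_qˣ`. Since
`SL₂(F_q)` acts 2-transitively on `P¹(F_q)`, the orbit is in bijection with the `(q + 1) q`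
ordered pairs of distinct points, and an orbit of split points is determined by the block of the
partition containing a fixed index `i₀`: a proper subset containing `i₀`, of which there are
`2 ^ (s - 1) - 1`.
-/

open MulAction

theorem P1Rel.equivalence (R : Type*) [CommRing R] : Equivalence (P1Rel R) where
  refl _ := ⟨1, one_mul _, one_mul _⟩
  symm := by
    rintro _ _ ⟨u, h1, h2⟩
    exact ⟨u⁻¹, by rw [← h1, Units.inv_mul_cancel_left], by rw [← h2, Units.inv_mul_cancel_left]⟩
  trans := by
    rintro _ _ _ ⟨u, h1, h2⟩ ⟨v, k1, k2⟩
    exact ⟨v * u, by rw [Units.val_mul, mul_assoc, h1, k1],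
      by rw [Units.val_mul, mul_assoc, h2, k2]⟩

section CommRing
variable {R S : Type*} [CommRing R] [CommRing S]

@[elab_as_elim]
theorem P1.ind {motive : P1 R → Prop}
    (mk : ∀ a b (hab : IsCoprime a b), motive (P1.mk (a, b) hab)) (z : P1 R) : motive z :=
  Quot.ind (fun ⟨(a, b), hab⟩ => mk a b hab) z

theorem P1.mk_eq_mk_iff_exists_unit {a b c d : R} (h : IsCoprime a b) (h' : IsCoprime c d) :
    P1.mk (a, b) h = P1.mk (c, d) h' ↔ ∃ t : Rˣ, (t : R) * a = c ∧ (t : R) * b = d :=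
  (P1Rel.equivalence R).quot_mk_eq_iff _ _

theorem P1.mk_eq_mk_iff_s13 {a b c d : R} (h : IsCoprime a b) (h' : IsCoprime c d) :
    P1.mk (a, b) h = P1.mk (c, d) h' ↔ a * d = b * c := by
  rw [P1.mk_eq_mk_iff_exists_unit]
  refine ⟨fun ⟨t, hc, hd⟩ => by rw [← hc, ← hd]; ring, fun e => ?_⟩
  obtain ⟨x, y, hxy⟩ := h
  obtain ⟨x', y', hxy'⟩ := h'
  -- `(c, d) = t • (a, b)` for `t = x c + y d`, and `x' a + y' b` is its inverse.
  have ht : (x * c + y * d) * (x' * a + y' * b) = 1 := by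
    linear_combination (y * x' - x * y') * e + x * a * hxy' + y * b * hxy' + hxy
  refine ⟨Units.mkOfMulEqOne _ _ ht, ?_, ?_⟩ <;> rw [Units.val_mkOfMulEqOne]
  · linear_combination c * hxy + y * e
  · linear_combination d * hxy - x * e

instance : MulAction (SpecialLinearGroup (Fin 2) R) (P1 R) where
  smul := actP1
  one_smul := actP1_one
  mul_smul := actP1_mul

theorem actP1_eq_smul (g : SpecialLinearGroup (Fin 2) R) (x : P1 R) : actP1 g x = g • x := rfl

theorem smul_mk_eq_mk_iff (g : SpecialLinearGroup (Fin 2) R) {a b c d : R} (h : IsCoprime a b)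
    (h' : IsCoprime c d) :
    g • P1.mk (a, b) h = P1.mk (c, d) h' ↔
      ((g : Matrix (Fin 2) (Fin 2) R) 0 0 * a + (g : Matrix (Fin 2) (Fin 2) R) 0 1 * b) * d =
        ((g : Matrix (Fin 2) (Fin 2) R) 1 0 * a + (g : Matrix (Fin 2) (Fin 2) R) 1 1 * b) * c :=
  P1.mk_eq_mk_iff_s13 _ _

theorem P1map_mk (f : R →+* S) (a b : R) (h : IsCoprime a b) :
    P1map f (P1.mk (a, b) h) = P1.mk (f a, f b) (h.map f) := rfl

theorem P1map_smul (f : R →+* S) (g : SpecialLinearGroup (Fin 2) R) (x : P1 R) :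
    P1map f (g • x) = SpecialLinearGroup.map f g • P1map f x := by
  induction x using P1.ind with
  | mk a b hab =>
    show P1.mk _ _ = P1.mk _ _
    congr 1
    simp [SpecialLinearGroup.map_apply_coe, actPair]

theorem mem_stabSub_iff {G : Type*} [Group G] (φ : G →* SpecialLinearGroup (Fin 2) R)
    (z : P1 R) (g : G) : g ∈ stabSub φ z ↔ actP1 (φ g) z = z := Iff.rfl

end CommRing

namespace P1
variable (R : Type*) [CommRing R]

def infty : P1 R := P1.mk (1, 0) isCoprime_one_left

def zero : P1 R := P1.mk (0, 1) isCoprime_one_right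

end P1

section Torus
variable {R : Type*} [CommRing R]

def diagUnits : Rˣ →* SpecialLinearGroup (Fin 2) R where
  toFun t := ⟨!![(t : R), 0; 0, ((t⁻¹ : Rˣ) : R)], by simp [Matrix.det_fin_two_of]⟩
  map_one' := by ext i j; fin_cases i <;> fin_cases j <;> simp
  map_mul' t t' := Subtype.ext <| by
    change _ = !![(t : R), 0; 0, ((t⁻¹ : Rˣ) : R)] * !![(t' : R), 0; 0, ((t'⁻¹ : Rˣ) : R)]
    simp [mul_comm]

theorem diagUnits_coe (t : Rˣ) :
    ((diagUnits t : SpecialLinearGroup (Fin 2) R) : Matrix (Fin 2) (Fin 2) R) =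
      !![(t : R), 0; 0, ((t⁻¹ : Rˣ) : R)] := rfl

theorem diagUnits_injective : Function.Injective (diagUnits (R := R)) := fun t t' h =>
  Units.ext (by simpa [diagUnits_coe] using congrArg (fun g : SpecialLinearGroup (Fin 2) R =>
    (g : Matrix (Fin 2) (Fin 2) R) 0 0) h)

theorem range_diagUnits :
    (diagUnits (R := R)).range =
      stabilizer (SpecialLinearGroup (Fin 2) R) (P1.infty R) ⊓
        stabilizer (SpecialLinearGroup (Fin 2) R) (P1.zero R) := by
  ext g
  rw [MonoidHom.mem_range, Subgroup.mem_inf, mem_stabilizer_iff, mem_stabilizer_iff, P1.infty,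
    P1.zero, smul_mk_eq_mk_iff, smul_mk_eq_mk_iff]
  simp only [mul_one, mul_zero, add_zero, zero_add]
  constructor
  · rintro ⟨t, rfl⟩
    simp [diagUnits_coe]
  · rintro ⟨h10, h01⟩
    have hdet : (g : Matrix (Fin 2) (Fin 2) R) 0 0 * (g : Matrix (Fin 2) (Fin 2) R) 1 1 = 1 := by
      have h := Matrix.SpecialLinearGroup.det_coe g
      rwa [Matrix.det_fin_two, ← h10, h01, mul_zero, sub_zero] at h
    let t := Units.mkOfMulEqOne _ _ hdet
    have ht : ((t⁻¹ : Rˣ) : R) = (g : Matrix (Fin 2) (Fin 2) R) 1 1 :=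
      Units.inv_eq_of_mul_eq_one_right hdet
    refine ⟨t, Matrix.SpecialLinearGroup.ext _ _ fun i j => ?_⟩
    fin_cases i <;> fin_cases j <;> simp [t, diagUnits_coe, ← h10, h01, ht]

end Torus

section Field
variable {K : Type*} [Field K]

theorem P1.infty_ne_zero : P1.infty K ≠ P1.zero K := by
  simp [P1.infty, P1.zero, P1.mk_eq_mk_iff_s13]

theorem exists_smul_eq_infty_and_smul_eq_zero {u v : P1 K} (h : u ≠ v) :
    ∃ g : SpecialLinearGroup (Fin 2) K, g • u = P1.infty K ∧ g • v = P1.zero K := by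
  induction u using P1.ind with | mk a b hab =>
  induction v using P1.ind with | mk c d hcd =>
  have hD : a * d - b * c ≠ 0 := fun h0 =>
    h ((P1.mk_eq_mk_iff_s13 hab hcd).mpr (by linear_combination h0))
  -- The first row is orthogonal to `(c, d)`, the second to `(a, b)`; dividing the second by
  -- `a d - b c` makes the determinant `1`.
  refine ⟨⟨!![d, -c; -b / (a * d - b * c), a / (a * d - b * c)], by
    rw [Matrix.det_fin_two_of]; linear_combination mul_inv_cancel₀ hD⟩, ?_, ?_⟩
  all_goals
    refine (smul_mk_eq_mk_iff _ _ _).mpr ?_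
    simp only [Matrix.of_apply, Matrix.cons_val', Matrix.cons_val_zero, Matrix.cons_val_one,
      Matrix.cons_val_fin_one]
    ring

theorem exists_smul_eq_and_smul_eq {u v x y : P1 K} (huv : u ≠ v) (hxy : x ≠ y) :
    ∃ g : SpecialLinearGroup (Fin 2) K, g • u = x ∧ g • v = y := by
  obtain ⟨k, hku, hkv⟩ := exists_smul_eq_infty_and_smul_eq_zero huv
  obtain ⟨l, hlx, hly⟩ := exists_smul_eq_infty_and_smul_eq_zero hxy
  exact ⟨l⁻¹ * k, by rw [mul_smul, hku, ← hlx, inv_smul_smul],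
    by rw [mul_smul, hkv, ← hly, inv_smul_smul]⟩

theorem nonempty_stabilizer_inf_stabilizer_mulEquiv_units {u v : P1 K} (h : u ≠ v) :
    Nonempty (↥(stabilizer (SpecialLinearGroup (Fin 2) K) u ⊓
      stabilizer (SpecialLinearGroup (Fin 2) K) v) ≃* Kˣ) := by
  obtain ⟨g, hu, hv⟩ := exists_smul_eq_infty_and_smul_eq_zero h
  have hconj : stabilizer (SpecialLinearGroup (Fin 2) K) u ⊓ stabilizer _ v =
      diagUnits.range.map (MulAut.conj g⁻¹).toMonoidHom := by
    rw [range_diagUnits, Subgroup.map_inf_eq _ _ _ (MulAut.conj g⁻¹).injective,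
      ← stabilizer_smul_eq_stabilizer_map_conj, ← stabilizer_smul_eq_stabilizer_map_conj, ← hu,
      ← hv, inv_smul_smul, inv_smul_smul]
  rw [hconj]
  exact ⟨(diagUnits.range.equivMapOfInjective _ (MulAut.conj g⁻¹).injective).symm.trans
    (MonoidHom.ofInjective diagUnits_injective).symm⟩

theorem P1map_constMap_injective {m : K[X]} (hm : ¬IsUnit m) :
    Function.Injective (P1map (constMap K m)) := by
  intro u v h
  induction u using P1.ind with | mk a b hab =>
  induction v using P1.ind with | mk c d hcd =>
  rw [P1map_mk, P1map_mk, P1.mk_eq_mk_iff_s13] at h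
  rw [P1.mk_eq_mk_iff_s13]
  have hdvd : m ∣ C (a * d - b * c) := by
    rw [← Ideal.mem_span_singleton, ← Ideal.Quotient.eq_zero_iff_mem]
    simpa [constMap, sub_eq_zero] using h
  by_contra hne
  exact hm (isUnit_of_dvd_unit hdvd (isUnit_C.mpr (sub_ne_zero.mpr hne).isUnit))

def P1.ofOption (K : Type*) [Field K] : Option K → P1 K :=
  fun o => o.elim (P1.infty K) fun x => P1.mk (x, 1) isCoprime_one_right

theorem P1.ofOption_bijective : Function.Bijective (P1.ofOption K) := by
  refine ⟨?_, fun z => ?_⟩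
  · rintro (_ | x) (_ | y) h <;> simp_all [P1.ofOption, P1.infty, P1.mk_eq_mk_iff_s13]
  · induction z using P1.ind with | mk a b hab =>
    by_cases hb : b = 0
    · exact ⟨none, by simp [P1.ofOption, P1.infty, P1.mk_eq_mk_iff_s13, hb]⟩
    · exact ⟨some (a / b), by simp [P1.ofOption, P1.mk_eq_mk_iff_s13]; field_simp⟩

instance [Finite K] : Finite (P1 K) := Finite.of_surjective _ P1.ofOption_bijective.2

theorem card_P1 [Finite K] : Nat.card (P1 K) = Nat.card K + 1 := by
  rw [← Nat.card_eq_of_bijective _ P1.ofOption_bijective, Finite.card_option]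

end Field

theorem card_pairs_ne {α : Type*} [Finite α] :
    Nat.card {p : α × α | p.1 ≠ p.2} = Nat.card α * Nat.card α - Nat.card α := by
  classical
  have := Fintype.ofFinite α
  rw [show {p : α × α | p.1 ≠ p.2} = ↑(Finset.univ.offDiag : Finset (α × α)) by ext; simp,
    Nat.card_coe_set_eq, Set.ncard_coe_finset, Finset.offDiag_card, Finset.card_univ,
    Nat.card_eq_fintype_card]

theorem card_mem_and_ne_univ {ι : Type*} [Finite ι] (i₀ : ι) :
    Nat.card {T : Set ι // i₀ ∈ T ∧ T ≠ Set.univ} = 2 ^ (Nat.card ι - 1) - 1 := by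
  classical
  have := Fintype.ofFinite ι
  let e : {T : Set ι // i₀ ∈ T ∧ T ≠ Set.univ} ≃ {T : Set {j // j ≠ i₀} // T ≠ Set.univ} :=
    { toFun T := ⟨(↑) ⁻¹' T.1, fun h => T.2.2 <| Set.eq_univ_of_forall fun j => by
        by_cases hj : j = i₀
        · exact hj ▸ T.2.1
        · exact Set.ext_iff.mp h ⟨j, hj⟩ |>.mpr trivial⟩
      invFun T := ⟨insert i₀ ((↑) '' T.1), Set.mem_insert _ _, fun h =>
        T.2 <| Set.eq_univ_of_forall fun j => by simpa [j.2] using Set.ext_iff.mp h j⟩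
      left_inv T := by
        ext j
        by_cases hj : j = i₀ <;> simp [hj, T.2.1]
      right_inv T := by
        ext j
        simp [j.2] }
  rw [Nat.card_congr e, Nat.card_eq_fintype_card, Fintype.card_subtype_compl, Fintype.card_set,
    Fintype.card_subtype_compl, Fintype.card_subtype_eq, Fintype.card_subtype_eq,
    Nat.card_eq_fintype_card]

theorem card_quot_of_forall_iff {α β : Type*} {r : α → α → Prop} (F : α → β)
    (hF : ∀ a b, r a b ↔ F a = F b) (hsurj : Function.Surjective F) :
    Nat.card (Quot r) = Nat.card β := by
  refine Nat.card_eq_of_bijective (Quot.lift F fun a b h => (hF a b).mp h) ⟨?_, ?_⟩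
  · rintro ⟨a⟩ ⟨b⟩ h
    exact Quot.sound ((hF a b).mpr h)
  · intro y
    obtain ⟨a, rfl⟩ := hsurj y
    exact ⟨Quot.mk r a, rfl⟩

section SplitPoints
variable {K : Type*} [Field K] {ι : Type*} {R : ι → Type*} [∀ i, CommRing (R i)]
  (f : ∀ i, K →+* R i)

open Classical in
noncomputable def splitPoint (S : Set ι) (u v : P1 K) : ∀ i, P1 (R i) :=
  fun i => P1map (f i) (if i ∈ S then u else v)

-- `SplitRational p r` is by definition `IsSplitPoint fun i => constMap Fq (p i ^ r i)`.
def IsSplitPoint (z : ∀ i, P1 (R i)) : Prop :=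
  ∃ S : Set ι, S.Nonempty ∧ Sᶜ.Nonempty ∧ ∃ u v : P1 K, u ≠ v ∧
    (∀ i ∈ S, z i = P1map (f i) u) ∧ (∀ i ∈ Sᶜ, z i = P1map (f i) v)

def splitBlock (i₀ : ι) (z : ∀ i, P1 (R i)) : Set ι :=
  {j | ∃ x, z j = P1map (f j) x ∧ z i₀ = P1map (f i₀) x}

variable {f} {S : Set ι} {u v : P1 K}

theorem splitPoint_of_mem {i : ι} (hi : i ∈ S) : splitPoint f S u v i = P1map (f i) u := by
  simp [splitPoint, hi]

theorem splitPoint_of_notMem {i : ι} (hi : i ∉ S) : splitPoint f S u v i = P1map (f i) v := by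
  simp [splitPoint, hi]

theorem splitPoint_compl : splitPoint f Sᶜ v u = splitPoint f S u v :=
  funext fun i => by by_cases hi : i ∈ S <;> simp [splitPoint, hi]

theorem forall_actP1_splitPoint_eq_iff (g : SpecialLinearGroup (Fin 2) K) (w : ∀ i, P1 (R i)) :
    (∀ i, actP1 (SpecialLinearGroup.map (f i) g) (splitPoint f S u v i) = w i) ↔
      splitPoint f S (g • u) (g • v) = w := by
  have h i : actP1 (SpecialLinearGroup.map (f i) g) (splitPoint f S u v i) =
      splitPoint f S (g • u) (g • v) i := by
    by_cases hi : i ∈ S <;> simp [splitPoint, hi, actP1_eq_smul, P1map_smul]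
  simp only [h, funext_iff]

theorem isSplitPoint_splitPoint (hS : S.Nonempty) (hSc : Sᶜ.Nonempty) (huv : u ≠ v) :
    IsSplitPoint f (splitPoint f S u v) :=
  ⟨S, hS, hSc, u, v, huv, fun _ hi => splitPoint_of_mem hi, fun _ hi => splitPoint_of_notMem hi⟩

theorem IsSplitPoint.exists_eq_splitPoint {z : ∀ i, P1 (R i)} (hz : IsSplitPoint f z) (i₀ : ι) :
    ∃ S : Set ι, i₀ ∈ S ∧ Sᶜ.Nonempty ∧ ∃ u v : P1 K, u ≠ v ∧ z = splitPoint f S u v := by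
  obtain ⟨S, hS, hSc, u, v, huv, hu, hv⟩ := hz
  have hz : z = splitPoint f S u v := funext fun i => by
    by_cases hi : i ∈ S
    · rw [hu i hi, splitPoint_of_mem hi]
    · rw [hv i hi, splitPoint_of_notMem hi]
  by_cases hi₀ : i₀ ∈ S
  · exact ⟨S, hi₀, hSc, u, v, huv, hz⟩
  · exact ⟨Sᶜ, hi₀, by rwa [compl_compl], v, u, huv.symm, by rw [splitPoint_compl, hz]⟩

theorem splitPoint_inj (hf : ∀ i, Function.Injective (P1map (f i))) (hS : S.Nonempty)
    (hSc : Sᶜ.Nonempty) {x y : P1 K} :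
    splitPoint f S u v = splitPoint f S x y ↔ u = x ∧ v = y := by
  refine ⟨fun h => ?_, fun ⟨hx, hy⟩ => hx ▸ hy ▸ rfl⟩
  obtain ⟨i, hi⟩ := hS
  obtain ⟨j, hj⟩ := hSc
  have hi' := congrFun h i
  have hj' := congrFun h j
  rw [splitPoint_of_mem hi, splitPoint_of_mem hi, (hf i).eq_iff] at hi'
  rw [splitPoint_of_notMem hj, splitPoint_of_notMem hj, (hf j).eq_iff] at hj'
  exact ⟨hi', hj'⟩

theorem splitBlock_splitPoint (hf : ∀ i, Function.Injective (P1map (f i))) {i₀ : ι}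
    (hi₀ : i₀ ∈ S) (huv : u ≠ v) :
    splitBlock f i₀ (splitPoint f S u v) = S := by
  ext j
  by_cases hj : j ∈ S <;> simp [splitBlock, splitPoint, hj, hi₀, (hf _).eq_iff, huv]

end SplitPoints

section Orbits
variable {K : Type*} [Field K] {ι : Type*} {R : ι → Type*} [∀ i, CommRing (R i)]
  {f : ∀ i, K →+* R i}

theorem iInf_stabSub_splitPoint (hf : ∀ i, Function.Injective (P1map (f i))) {S : Set ι}
    (hS : S.Nonempty) (hSc : Sᶜ.Nonempty) (u v : P1 K) :
    ⨅ i, stabSub (SpecialLinearGroup.map (f i)) (splitPoint f S u v i) =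
      stabilizer (SpecialLinearGroup (Fin 2) K) u ⊓
        stabilizer (SpecialLinearGroup (Fin 2) K) v := by
  ext g
  simp only [Subgroup.mem_iInf, mem_stabSub_iff, forall_actP1_splitPoint_eq_iff,
    splitPoint_inj hf hS hSc, Subgroup.mem_inf, mem_stabilizer_iff]

theorem card_orbit_splitPoint [Fintype K] (hf : ∀ i, Function.Injective (P1map (f i)))
    {S : Set ι} (hS : S.Nonempty) (hSc : Sᶜ.Nonempty) {u v : P1 K} (huv : u ≠ v) :
    Nat.card {w : ∀ i, P1 (R i) | ∃ g : SpecialLinearGroup (Fin 2) K,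
        ∀ i, actP1 (SpecialLinearGroup.map (f i) g) (splitPoint f S u v i) = w i} =
      Fintype.card K * (Fintype.card K + 1) := by
  have horbit : {w : ∀ i, P1 (R i) | ∃ g : SpecialLinearGroup (Fin 2) K,
        ∀ i, actP1 (SpecialLinearGroup.map (f i) g) (splitPoint f S u v i) = w i} =
      (fun p : P1 K × P1 K => splitPoint f S p.1 p.2) '' {p | p.1 ≠ p.2} := by
    ext w
    simp only [forall_actP1_splitPoint_eq_iff, Set.mem_ofPred_eq, Set.mem_image, Prod.exists]
    constructor
    · rintro ⟨g, rfl⟩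
      exact ⟨g • u, g • v, (MulAction.injective g).ne huv, rfl⟩
    · rintro ⟨x, y, hxy, rfl⟩
      obtain ⟨g, rfl, rfl⟩ := exists_smul_eq_and_smul_eq huv hxy
      exact ⟨g, rfl⟩
  have hinj : Set.InjOn (fun p : P1 K × P1 K => splitPoint f S p.1 p.2) {p | p.1 ≠ p.2} :=
    fun p _ q _ h => Prod.ext_iff.mpr ((splitPoint_inj hf hS hSc).mp h)
  rw [horbit, Nat.card_image_of_injOn hinj, card_pairs_ne, card_P1, Nat.card_eq_fintype_card,
    ← Nat.mul_sub_one, Nat.add_sub_cancel, mul_comm]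

theorem exists_forall_actP1_eq_iff_splitBlock_eq (hf : ∀ i, Function.Injective (P1map (f i)))
    (i₀ : ι) {z w : ∀ i, P1 (R i)} (hz : IsSplitPoint f z) (hw : IsSplitPoint f w) :
    (∃ g : SpecialLinearGroup (Fin 2) K,
        ∀ i, actP1 (SpecialLinearGroup.map (f i) g) (z i) = w i) ↔
      splitBlock f i₀ z = splitBlock f i₀ w := by
  obtain ⟨S, hi₀, -, u, v, huv, rfl⟩ := hz.exists_eq_splitPoint i₀
  obtain ⟨T, hi₀', -, x, y, hxy, rfl⟩ := hw.exists_eq_splitPoint i₀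
  simp only [forall_actP1_splitPoint_eq_iff, splitBlock_splitPoint hf hi₀ huv,
    splitBlock_splitPoint hf hi₀' hxy]
  constructor
  · rintro ⟨g, hg⟩
    rw [← splitBlock_splitPoint hf hi₀ ((MulAction.injective g).ne huv), hg,
      splitBlock_splitPoint hf hi₀' hxy]
  · rintro rfl
    obtain ⟨g, hgx, hgy⟩ := exists_smul_eq_and_smul_eq huv hxy
    exact ⟨g, by rw [hgx, hgy]⟩

theorem card_quot_isSplitPoint [Finite ι] (hf : ∀ i, Function.Injective (P1map (f i))) (i₀ : ι) :
    Nat.card (Quot fun z w : {z : ∀ i, P1 (R i) // IsSplitPoint f z} =>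
        ∃ g : SpecialLinearGroup (Fin 2) K,
          ∀ i, actP1 (SpecialLinearGroup.map (f i) g) (z.1 i) = w.1 i) =
      2 ^ (Nat.card ι - 1) - 1 := by
  let block : {z : ∀ i, P1 (R i) // IsSplitPoint f z} → {T : Set ι // i₀ ∈ T ∧ T ≠ Set.univ} :=
    fun z => ⟨splitBlock f i₀ z.1, by
      obtain ⟨S, hi₀, hSc, u, v, huv, hz⟩ := z.2.exists_eq_splitPoint i₀
      rw [hz, splitBlock_splitPoint hf hi₀ huv]
      exact ⟨hi₀, Set.nonempty_compl.mp hSc⟩⟩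
  have hsurj : Function.Surjective block := fun ⟨T, hi₀, hT⟩ =>
    ⟨⟨splitPoint f T (P1.infty K) (P1.zero K),
      isSplitPoint_splitPoint ⟨i₀, hi₀⟩ (Set.nonempty_compl.mpr hT) P1.infty_ne_zero⟩,
      Subtype.ext (splitBlock_splitPoint hf hi₀ P1.infty_ne_zero)⟩
  rw [card_quot_of_forall_iff block
    (fun z w => (exists_forall_actP1_eq_iff_splitBlock_eq hf i₀ z.2 w.2).trans Subtype.mk_eq_mk.symm)
    hsurj, card_mem_and_ne_univ]

end Orbits

theorem split_rational_orbits_general (s : ℕ) (p : Fin s → Polynomial Fq) (r : Fin s → ℕ)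
    (hirr : ∀ i, Irreducible (p i)) (hr : ∀ i, 1 ≤ r i)
    (z : ∀ i, P1 (Polynomial Fq ⧸ Ideal.span {p i ^ r i}))
    (hz : SplitRational p r z) :
    Nonempty ((↥(⨅ i, stabSub (SpecialLinearGroup.map (constMap Fq (p i ^ r i))) (z i) :
      Subgroup (SpecialLinearGroup (Fin 2) Fq))) ≃* Fqˣ) ∧
    Nat.card {w : ∀ i, P1 (Polynomial Fq ⧸ Ideal.span {p i ^ r i}) |
        ∃ g : SpecialLinearGroup (Fin 2) Fq, ∀ i,
          actP1 (SpecialLinearGroup.map (constMap Fq (p i ^ r i)) g) (z i) = w i} =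
      Fintype.card Fq * (Fintype.card Fq + 1) ∧
    Nat.card (Quot (fun z w : {z : ∀ i, P1 (Polynomial Fq ⧸ Ideal.span {p i ^ r i}) //
        SplitRational p r z} =>
        ∃ g : SpecialLinearGroup (Fin 2) Fq, ∀ i,
          actP1 (SpecialLinearGroup.map (constMap Fq (p i ^ r i)) g) (z.1 i) = w.1 i)) =
      2 ^ (s - 1) - 1 := by
  have hf i : Function.Injective (P1map (constMap Fq (p i ^ r i))) :=
    P1map_constMap_injective <|
      (isUnit_pow_iff (Nat.one_le_iff_ne_zero.mp (hr i))).not.mpr (hirr i).not_isUnit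
  obtain ⟨i₀, -⟩ := hz.choose_spec.1
  obtain ⟨S, hi₀, hSc, u, v, huv, rfl⟩ :=
    IsSplitPoint.exists_eq_splitPoint (f := fun i => constMap Fq (p i ^ r i)) hz i₀
  refine ⟨?_, card_orbit_splitPoint hf ⟨i₀, hi₀⟩ hSc huv, ?_⟩
  · rw [iInf_stabSub_splitPoint hf ⟨i₀, hi₀⟩ hSc]
    exact nonempty_stabilizer_inf_stabilizer_mulEquiv_units huv
  · have h := card_quot_isSplitPoint hf i₀
    rw [Nat.card_fin] at h
    exact h

/-- For a point of split rational type, the stabilizer in `SL₂(Fq)`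
(acting diagonally) is isomorphic to `Fqˣ`, its orbit has length `q(q+1)`, and there
are exactly `2^(s-1) - 1` orbits of such points. -/
theorem split_rational_orbits (s : ℕ) (p : Fin s → Polynomial Fq) (r : Fin s → ℕ)
    (hirr : ∀ i, Irreducible (p i)) (hmon : ∀ i, (p i).Monic) (hr : ∀ i, 1 ≤ r i)
    (hinj : Function.Injective p) (hq : Odd (Fintype.card Fq))
    (z : ∀ i, P1 (Polynomial Fq ⧸ Ideal.span {p i ^ r i}))
    (hz : SplitRational p r z) :
    Nonempty ((↥(⨅ i, stabSub (SpecialLinearGroup.map (constMap Fq (p i ^ r i))) (z i) :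
      Subgroup (SpecialLinearGroup (Fin 2) Fq))) ≃* Fqˣ) ∧
    Nat.card {w : ∀ i, P1 (Polynomial Fq ⧸ Ideal.span {p i ^ r i}) |
        ∃ g : SpecialLinearGroup (Fin 2) Fq, ∀ i,
          actP1 (SpecialLinearGroup.map (constMap Fq (p i ^ r i)) g) (z i) = w i} =
      Fintype.card Fq * (Fintype.card Fq + 1) ∧
    Nat.card (Quot (fun z w : {z : ∀ i, P1 (Polynomial Fq ⧸ Ideal.span {p i ^ r i}) //
        SplitRational p r z} =>
        ∃ g : SpecialLinearGroup (Fin 2) Fq, ∀ i,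
          actP1 (SpecialLinearGroup.map (constMap Fq (p i ^ r i)) g) (z.1 i) = w.1 i)) =
      2 ^ (s - 1) - 1 :=
  split_rational_orbits_general s p r hirr hr z hz
end

section
/- For q odd, the genus 1 + (2/(q^2−1))ε(n) − (2/(q−1))κ(n) + 2^{s−1}((3−q)/(q−1) + ((1−q)/(q+1))ε̃(n)) of Γ0^1(n)\T equals 0 if and only if n is (up to a unit) a prime of degree 1 or the square of a prime of degree 1, and equals 1 if and only if n is a product of two distinct primes of degree 1 or a prime of degree 2. -/
set_option maxHeartbeats 1600000


open scoped Classical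

/-- The genus of `Γ₀¹(n)\T` for `n = ∏ pᵢ^{rᵢ}`, as given by the genus formula
`1 + (2/(q²-1))ε(n) - (2/(q-1))κ(n) + 2^(s-1)((3-q)/(q-1) + ((1-q)/(q+1))ε̃(n))`. -/
noncomputable def genusFormula {Fq : Type*} [Field Fq] [Fintype Fq]
    (s : ℕ) (p : Fin s → Polynomial Fq) (r : Fin s → ℕ) : ℚ :=
  1 + 2 / ((Fintype.card Fq : ℚ) ^ 2 - 1) *
        (∏ i, ((Fintype.card Fq : ℚ)) ^ ((p i).natDegree * (r i - 1)) *
          ((Fintype.card Fq : ℚ) ^ (p i).natDegree + 1))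
    - 2 / ((Fintype.card Fq : ℚ) - 1) *
        (∏ i, ((Fintype.card Fq : ℚ) ^ ((p i).natDegree * ((r i - 1) / 2)) +
          (Fintype.card Fq : ℚ) ^ ((p i).natDegree * (r i / 2))))
    + 2 ^ (s - 1) *
        ((3 - (Fintype.card Fq : ℚ)) / ((Fintype.card Fq : ℚ) - 1) +
          (1 - (Fintype.card Fq : ℚ)) / ((Fintype.card Fq : ℚ) + 1) *
            (if ∀ i, Even (p i).natDegree then (1 : ℚ) else 0))


noncomputable def uu (Q : ℚ) (d r : ℕ) : ℚ := Q ^ (d * (r - 1)) * (Q ^ d + 1)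
noncomputable def vv (Q : ℚ) (d r : ℕ) : ℚ := Q ^ (d * ((r - 1) / 2)) + Q ^ (d * (r / 2))

section perfactor
variable {Q : ℚ} {d r : ℕ} (hQ : 3 ≤ Q) (hd : 1 ≤ d) (hr : 1 ≤ r)
include hQ

lemma hQ1 : (1:ℚ) ≤ Q := by linarith

include hd hr

lemma aux1 : (Q+1) * vv Q d r ≤ 2 * uu Q d r := by
  have h1 : (1:ℚ) ≤ Q := by linarith
  have hab : d * ((r-1)/2) + d * (r/2) = d * (r-1) := by
    rw [← Nat.mul_add]; congr 1; omega
  have hmono : Q ^ (d * ((r-1)/2)) ≤ Q ^ (d * (r/2)) :=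
    pow_le_pow_right₀ h1 (Nat.mul_le_mul_left d (by omega))
  have hb0 : (0:ℚ) < Q ^ (d * (r/2)) := by positivity
  have ha1 : (1:ℚ) ≤ Q ^ (d * ((r-1)/2)) := one_le_pow₀ h1
  have hQd : Q ≤ Q ^ d := by
    calc Q = Q ^ 1 := (pow_one Q).symm
    _ ≤ Q ^ d := pow_le_pow_right₀ h1 hd
  have key : (Q+1) * (2 * Q ^ (d * (r/2))) ≤ 2 * uu Q d r := by
    unfold uu
    rw [← hab, pow_add]
    have : (Q+1) ≤ Q ^ (d * ((r-1)/2)) * (Q ^ d + 1) := by nlinarith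
    nlinarith
  unfold vv
  nlinarith
end perfactor

section perfactor2
variable {Q : ℚ} {d r : ℕ} (hQ : 3 ≤ Q)
include hQ

lemma auxv2 : 2 ≤ vv Q d r := by
  have h1 : (1:ℚ) ≤ Q := by linarith
  have := one_le_pow₀ (n := d * ((r-1)/2)) h1
  have := one_le_pow₀ (n := d * (r/2)) h1
  unfold vv; linarith

lemma auxuQ (hd : 1 ≤ d) : Q + 1 ≤ uu Q d r := by
  have h1 : (1:ℚ) ≤ Q := by linarith
  have h2 := one_le_pow₀ (n := d * (r-1)) h1
  have hQd : Q ≤ Q ^ d := by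
    calc Q = Q ^ 1 := (pow_one Q).symm
    _ ≤ Q ^ d := pow_le_pow_right₀ h1 hd
  unfold uu; nlinarith

omit hQ in
lemma uu_r1 : uu Q d 1 = Q ^ d + 1 := by unfold uu; norm_num

omit hQ in
lemma vv_r1 : vv Q d 1 = 2 := by unfold vv; norm_num

omit hQ in
lemma uu_12 : uu Q 1 2 = Q * (Q + 1) := by unfold uu; norm_num

omit hQ in
lemma vv_12 : vv Q 1 2 = 1 + Q := by unfold vv; norm_num

lemma aux2 (hd : 1 ≤ d) (hr : 1 ≤ r) (h2 : 2 ≤ d * r) :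
    (Q+1) * vv Q d r + (Q^2 - 1) ≤ 2 * uu Q d r := by
  have h1 : (1:ℚ) ≤ Q := by linarith
  rcases Nat.lt_or_ge r 2 with hr2 | hr2
  · -- r = 1, d ≥ 2
    have : r = 1 := by omega
    subst this
    have hd2 : 2 ≤ d := by omega
    have hQd : Q^2 ≤ Q ^ d := pow_le_pow_right₀ h1 hd2
    rw [uu_r1, vv_r1]
    nlinarith
  · by_cases hsp : d = 1 ∧ r = 2
    · obtain ⟨h1', h2'⟩ := hsp; subst h1'; subst h2'
      rw [uu_12, vv_12]; nlinarith
    · -- r ≥ 2 and (d ≥ 2 or r ≥ 3), so a + d ≥ 2 where a = d*((r-1)/2)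
      set a := d * ((r-1)/2) with ha
      set b := d * (r/2) with hb
      have hab : a + b = d * (r-1) := by
        rw [ha, hb, ← Nat.mul_add]; congr 1; omega
      have had : 2 ≤ a + d := by
        rcases Nat.lt_or_ge d 2 with h | h
        · have hd1 : d = 1 := by omega
          have hr3 : 3 ≤ r := by omega
          rw [ha, hd1]; omega
        · omega
      have hb1 : 1 ≤ b := by
        have h' : 1 ≤ r/2 := by omega
        calc 1 ≤ d * 1 := by omega
        _ ≤ b := by rw [hb]; exact Nat.mul_le_mul_left d h'
      have hA1 : (1:ℚ) ≤ Q ^ a := one_le_pow₀ h1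
      have hB1 : Q ≤ Q ^ b := by
        calc Q = Q ^ 1 := (pow_one Q).symm
        _ ≤ Q ^ b := pow_le_pow_right₀ h1 hb1
      have hB1' : (1:ℚ) ≤ Q ^ b := one_le_pow₀ h1
      have hAD : Q^2 ≤ Q ^ (a + d) := pow_le_pow_right₀ h1 had
      have hB0 : (0:ℚ) < Q ^ b := by positivity
      have hA0 : (0:ℚ) < Q ^ a := by positivity
      have egoal : Q ^ (d * (r-1)) * (Q ^ d + 1) = Q ^ (a+d) * Q ^ b + Q ^ a * Q ^ b := by
        rw [← hab, pow_add, pow_add]; ring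
      have hp1 : (Q+1) * Q ^ a ≤ 2 * (Q ^ a * Q ^ b) := by
        nlinarith [mul_le_mul_of_nonneg_left hB1 hA0.le]
      have hp2 : (Q+1) * Q ^ b + (Q^2 - 1) ≤ 2 * (Q ^ (a+d) * Q ^ b) := by
        nlinarith [mul_le_mul_of_nonneg_right hAD hB0.le,
          mul_nonneg (by nlinarith : (0:ℚ) ≤ 2*Q^2 - Q - 1) (by linarith : (0:ℚ) ≤ Q ^ b - 1)]
      unfold uu vv
      rw [← ha, ← hb, egoal]
      linarith
end perfactor2

lemma aux5 {Q : ℚ} {d r : ℕ} (hQ : 3 ≤ Q) (hd : 1 ≤ d) (hr : 1 ≤ r) (h3 : 3 ≤ d * r) :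
    2*(Q+1) * vv Q d r + (3*Q^2 - 4*Q - 3) ≤ 2 * uu Q d r := by
  have h1 : (1:ℚ) ≤ Q := by linarith
  rcases Nat.lt_or_ge r 2 with hr2 | hr2
  · -- r = 1, d ≥ 3
    have : r = 1 := by omega
    subst this
    have hd3 : 3 ≤ d := by omega
    have hQd : Q^3 ≤ Q ^ d := pow_le_pow_right₀ h1 hd3
    rw [uu_r1, vv_r1]
    nlinarith
  · rcases Nat.lt_or_ge r 3 with hr3 | hr3
    · -- r = 2, d ≥ 2
      have hre : r = 2 := by omega
      subst hre
      have hd2 : 2 ≤ d := by omega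
      have ht : Q^2 ≤ Q ^ d := pow_le_pow_right₀ h1 hd2
      have ha0 : d * ((2-1)/2) = 0 := by omega
      have hb : d * (2/2) = d := by omega
      unfold uu vv
      rw [ha0, hb, pow_zero]
      set t := Q ^ d with htd
      have ht3 : 9 ≤ t := by nlinarith
      nlinarith [sq_nonneg (t - Q^2), sq_nonneg (t - Q)]
    · -- r ≥ 3 : a ≥ d ≥ 1, b ≥ d ≥ 1
      set a := d * ((r-1)/2) with ha
      set b := d * (r/2) with hb
      have hab : a + b = d * (r-1) := by
        rw [ha, hb, ← Nat.mul_add]; congr 1; omega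
      have ha1 : 1 ≤ a := by
        have h' : 1 ≤ (r-1)/2 := by omega
        calc 1 ≤ d * 1 := by omega
        _ ≤ a := by rw [ha]; exact Nat.mul_le_mul_left d h'
      have hb1 : 1 ≤ b := by
        have h' : 1 ≤ r/2 := by omega
        calc 1 ≤ d * 1 := by omega
        _ ≤ b := by rw [hb]; exact Nat.mul_le_mul_left d h'
      have hA : Q ≤ Q ^ a := by
        calc Q = Q ^ 1 := (pow_one Q).symm
        _ ≤ Q ^ a := pow_le_pow_right₀ h1 ha1
      have hB : Q ≤ Q ^ b := by
        calc Q = Q ^ 1 := (pow_one Q).symm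
        _ ≤ Q ^ b := pow_le_pow_right₀ h1 hb1
      have hAB : Q ^ a ≤ Q ^ b := pow_le_pow_right₀ h1 (by
        rw [ha, hb]; exact Nat.mul_le_mul_left d (by omega))
      have hQd : Q ≤ Q ^ d := by
        calc Q = Q ^ 1 := (pow_one Q).symm
        _ ≤ Q ^ d := pow_le_pow_right₀ h1 hd
      have hA0 : (0:ℚ) < Q ^ a := by positivity
      have hB0 : (0:ℚ) < Q ^ b := by positivity
      have egoal : Q ^ (d * (r-1)) * (Q ^ d + 1) = Q ^ a * Q ^ b * (Q ^ d + 1) := by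
        rw [← hab, pow_add]
      -- 2 u = 2 Q^a Q^b (Q^d+1) ≥ 2 Q Q^b (Q+1)
      have key : 2 * Q * Q ^ b * (Q + 1) ≤ 2 * (Q ^ a * Q ^ b * (Q ^ d + 1)) := by
        have s1 : Q * (Q + 1) ≤ Q ^ a * (Q ^ d + 1) := by nlinarith
        nlinarith [mul_le_mul_of_nonneg_right s1 hB0.le]
      -- LHS ≤ 4(Q+1) Q^b + (3Q²-4Q-3)
      have lhs1 : 2*(Q+1) * vv Q d r ≤ 4 * (Q+1) * Q ^ b := by
        unfold vv
        rw [← ha, ← hb]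
        nlinarith
      -- 2 Q Q^b (Q+1) - 4(Q+1)Q^b = 2(Q+1)Q^b (Q-2) ≥ 2(Q+1)Q(Q-2) ≥ 3Q²-4Q-3
      have fin : 4 * (Q+1) * Q ^ b + (3*Q^2 - 4*Q - 3) ≤ 2 * Q * Q ^ b * (Q + 1) := by
        nlinarith [mul_le_mul_of_nonneg_left hB (by nlinarith : (0:ℚ) ≤ 2*(Q+1)*(Q-2))]
      unfold uu
      rw [egoal]
      linarith

open scoped Classical in
noncomputable def GG (Q : ℚ) (s : ℕ) (d r : Fin s → ℕ) : ℚ :=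
  (Q^2 - 1) + 2 * (∏ i, uu Q (d i) (r i)) - 2*(Q+1) * (∏ i, vv Q (d i) (r i))
    + 2^(s-1) * ((3-Q)*(Q+1) - (Q-1)^2 * (if ∀ i, Even (d i) then (1:ℚ) else 0))

lemma GG_bound3 (Q : ℚ) (hQ : 3 ≤ Q) (s : ℕ) (hs3 : 3 ≤ s) (d r : Fin s → ℕ)
    (hd : ∀ i, 1 ≤ d i) (hr : ∀ i, 1 ≤ r i) :
    2*(Q^2-1) ≤ GG Q s d r := by
  classical
  have h1 : (1:ℚ) ≤ Q := by linarith
  obtain ⟨n, hsn⟩ : ∃ n, s = n + 3 := ⟨s - 3, by omega⟩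
  rw [GG]
  set e : ℚ := if ∀ i, Even (d i) then (1:ℚ) else 0 with he
  have he01 : 0 ≤ e ∧ e ≤ 1 := by rw [he]; split <;> norm_num
  set U := ∏ i, uu Q (d i) (r i) with hU
  set V := ∏ i, vv Q (d i) (r i) with hV
  have hVpos : (0:ℚ) < V := Finset.prod_pos (fun i _ => by
    have := auxv2 (d := d i) (r := r i) hQ; linarith)
  have hUQ : (Q+1)^s ≤ U := by
    calc (Q+1)^s = ∏ _i : Fin s, (Q+1) := by
          rw [Finset.prod_const, Finset.card_univ, Fintype.card_fin]
    _ ≤ U := Finset.prod_le_prod (fun i _ => by linarith) (fun i _ => auxuQ hQ (hd i))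
  have hUpos : (0:ℚ) < U := lt_of_lt_of_le (by positivity) hUQ
  have hPV : (Q+1)^s * V ≤ 2^s * U := by
    have h := Finset.prod_le_prod (f := fun i => (Q+1) * vv Q (d i) (r i))
      (g := fun i => 2 * uu Q (d i) (r i)) (s := Finset.univ)
      (fun i _ => by
        show (0:ℚ) ≤ (Q+1) * vv Q (d i) (r i)
        have := auxv2 (d := d i) (r := r i) hQ; nlinarith)
      (fun i _ => aux1 hQ (hd i) (hr i))
    rwa [Finset.prod_mul_distrib, Finset.prod_mul_distrib, Finset.prod_const,
      Finset.prod_const, Finset.card_univ, Fintype.card_fin, ← hU, ← hV] at h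
  have h24 : (2:ℚ)^(s+1) ≤ (Q+1)^(s-1) := by
    calc (2:ℚ)^(s+1) ≤ (2:ℚ)^(2*(s-1)) := pow_le_pow_right₀ one_le_two (by omega)
    _ = (4:ℚ)^(s-1) := by rw [pow_mul]; norm_num
    _ ≤ (Q+1)^(s-1) := pow_le_pow_left₀ (by norm_num) (by linarith) _
  have hcancel : 2*(Q+1) * V ≤ U := by
    have hp : (0:ℚ) < (Q+1)^(s-1) := by positivity
    have epow : (Q+1)^(s-1) * (Q+1) = (Q+1)^s := by
      rw [← pow_succ]; congr 1; omega
    have step : 2*(Q+1) * V * (Q+1)^(s-1) ≤ U * (Q+1)^(s-1) := by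
      have e1 : 2*(Q+1) * V * (Q+1)^(s-1) = 2 * ((Q+1)^s * V) := by
        rw [← epow]; ring
      rw [e1]
      calc 2 * ((Q+1)^s * V) ≤ 2 * (2^s * U) := by linarith
      _ = 2^(s+1) * U := by rw [pow_succ]; ring
      _ ≤ (Q+1)^(s-1) * U := mul_le_mul_of_nonneg_right h24 hUpos.le
      _ = U * (Q+1)^(s-1) := by ring
    exact le_of_mul_le_mul_right step hp
  have hT1 : (1:ℚ) ≤ (2:ℚ)^n := one_le_pow₀ one_le_two
  have hQs : 2^n * (Q+1)^3 ≤ (Q+1)^s := by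
    have hT : (2:ℚ)^n ≤ (Q+1)^n := pow_le_pow_left₀ (by norm_num) (by linarith) _
    have hsplit : (Q+1)^s = (Q+1)^n * (Q+1)^3 := by rw [← pow_add, hsn]
    rw [hsplit]
    have h3 : (0:ℚ) < (Q+1)^3 := by positivity
    nlinarith
  have hbr : (Q^2 - 1) ≤ (2:ℚ)^n * ((Q+1)^3 - 8*(Q^2-2*Q-1)) := by
    have hb0 : (Q^2-1) ≤ (Q+1)^3 - 8*(Q^2-2*Q-1) := by nlinarith [sq_nonneg (Q-3)]
    have hb1 : (0:ℚ) ≤ (Q+1)^3 - 8*(Q^2-2*Q-1) := by nlinarith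
    nlinarith
  have hpow : (2:ℚ)^(s-1) = 4 * 2^n := by
    have h' : s - 1 = n + 2 := by omega
    rw [h', pow_add]; ring
  have hsq : (0:ℚ) ≤ (Q-1)^2 := sq_nonneg _
  have hee : (Q-1)^2 * e ≤ (Q-1)^2 := by nlinarith [he01.1, he01.2]
  rw [hpow]
  nlinarith [hcancel, hUQ, hQs, hbr, hee]

lemma GG_bound (Q : ℚ) (hQ : 3 ≤ Q) (s : ℕ) (hs : 1 ≤ s) (d r : Fin s → ℕ)
    (hd : ∀ i, 1 ≤ d i) (hr : ∀ i, 1 ≤ r i) (hM : 3 ≤ ∑ i, d i * r i) :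
    2*(Q^2-1) ≤ GG Q s d r := by
  classical
  have h1 : (1:ℚ) ≤ Q := by linarith
  rcases Nat.lt_or_ge s 3 with hs3 | hs3
  swap
  · exact GG_bound3 Q hQ s hs3 d r hd hr
  obtain _ | _ | _ | n := s
  · omega
  · -- s = 1
    rw [GG]
    rw [Fin.prod_univ_one, Fin.prod_univ_one, Fin.sum_univ_one] at *
    set e : ℚ := if ∀ i, Even (d i) then (1:ℚ) else 0 with he
    have he01 : 0 ≤ e ∧ e ≤ 1 := by rw [he]; split <;> norm_num
    have h5 := aux5 hQ (hd 0) (hr 0) hM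
    have hsq : (0:ℚ) ≤ (Q-1)^2 := sq_nonneg _
    have hee : (Q-1)^2 * e ≤ (Q-1)^2 := by nlinarith [he01.1, he01.2]
    norm_num
    nlinarith
  · -- s = 2
    rw [GG]
    rw [Fin.prod_univ_two, Fin.prod_univ_two, Fin.sum_univ_two] at *
    set e : ℚ := if ∀ i, Even (d i) then (1:ℚ) else 0 with he
    have he01 : 0 ≤ e ∧ e ≤ 1 := by rw [he]; split <;> norm_num
    have hm0 : 1 ≤ d 0 * r 0 := Nat.one_le_iff_ne_zero.mpr (by
      have := hd 0; have := hr 0; positivity)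
    have hm1 : 1 ≤ d 1 * r 1 := Nat.one_le_iff_ne_zero.mpr (by
      have := hd 1; have := hr 1; positivity)
    have hv0 : 2 ≤ vv Q (d 0) (r 0) := auxv2 hQ
    have hv1 : 2 ≤ vv Q (d 1) (r 1) := auxv2 hQ
    have hsq : (0:ℚ) ≤ (Q-1)^2 := sq_nonneg _
    have hee : (Q-1)^2 * e ≤ (Q-1)^2 := by nlinarith [he01.1, he01.2]
    have main : ∀ u0 v0 u1 v1 : ℚ, 2 ≤ v0 → 2 ≤ v1 →
        (Q+1) * v0 + (Q^2-1) ≤ 2*u0 → (Q+1) * v1 ≤ 2*u1 →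
        2*(Q^2-1) ≤ (Q^2 - 1) + 2 * (u0 * u1) - 2*(Q+1) * (v0 * v1) +
          2^(2-1) * ((3-Q)*(Q+1) - (Q-1)^2 * e) := by
      intro u0 v0 u1 v1 hv0 hv1 h1' h2'
      have hP : ((Q+1)*v0 + (Q^2-1)) * ((Q+1)*v1) ≤ (2*u0) * (2*u1) :=
        mul_le_mul h1' h2' (by nlinarith) (by nlinarith)
      have hvv : 4 ≤ v0 * v1 := by
        nlinarith [mul_nonneg (by linarith : (0:ℚ) ≤ v0 - 2) (by linarith : (0:ℚ) ≤ v1 - 2)]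
      have hX : (0:ℚ) ≤ (Q-3) * (v0*v1 - 4) :=
        mul_nonneg (by linarith) (by linarith)
      have hY : (0:ℚ) ≤ (Q^2-1)*(Q+1) * (v1 - 2) :=
        mul_nonneg (by nlinarith) (by linarith)
      norm_num
      nlinarith [sq_nonneg (Q-3), hee]
    rcases Nat.lt_or_ge (d 0 * r 0) 2 with hc | hc
    · have hm1' : 2 ≤ d 1 * r 1 := by omega
      have h2' := aux2 hQ (hd 1) (hr 1) hm1'
      have h1' := aux1 hQ (hd 0) (hr 0)
      have hmm := main (uu Q (d 1) (r 1)) (vv Q (d 1) (r 1)) (uu Q (d 0) (r 0))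
        (vv Q (d 0) (r 0)) hv1 hv0 h2' h1'
      nlinarith [hmm]
    · have h2' := aux2 hQ (hd 0) (hr 0) hc
      have h1' := aux1 hQ (hd 1) (hr 1)
      exact main _ _ _ _ hv0 hv1 h2' h1'
  · omega

lemma GG_val_11 (Q : ℚ) (d r : Fin 1 → ℕ) (h1 : d 0 = 1) (h2 : r 0 = 1) :
    GG Q 1 d r = 0 := by
  classical
  rw [GG, Fin.prod_univ_one, Fin.prod_univ_one, h1, h2, if_neg]
  · rw [uu_r1, vv_r1, pow_one]; ring
  · intro h; have := h 0; rw [h1] at this; exact (Nat.not_even_one) this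

lemma GG_val_12 (Q : ℚ) (d r : Fin 1 → ℕ) (h1 : d 0 = 1) (h2 : r 0 = 2) :
    GG Q 1 d r = 0 := by
  classical
  rw [GG, Fin.prod_univ_one, Fin.prod_univ_one, h1, h2, if_neg]
  · rw [uu_12, vv_12]; ring
  · intro h; have := h 0; rw [h1] at this; exact (Nat.not_even_one) this

lemma GG_val_21 (Q : ℚ) (d r : Fin 1 → ℕ) (h1 : d 0 = 2) (h2 : r 0 = 1) :
    GG Q 1 d r = Q^2 - 1 := by
  classical
  rw [GG, Fin.prod_univ_one, Fin.prod_univ_one, h1, h2, if_pos]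
  · rw [uu_r1, vv_r1]; ring
  · intro i
    have : i = 0 := Subsingleton.elim i 0
    rw [this, h1]; exact even_two

lemma GG_val_s2 (Q : ℚ) (d r : Fin 2 → ℕ) (h1 : ∀ i, d i = 1) (h2 : ∀ i, r i = 1) :
    GG Q 2 d r = Q^2 - 1 := by
  classical
  rw [GG, Fin.prod_univ_two, Fin.prod_univ_two, h1 0, h1 1, h2 0, h2 1, if_neg]
  · rw [uu_r1, vv_r1, pow_one]; ring
  · intro h; have := h 0; rw [h1 0] at this; exact (Nat.not_even_one) this


lemma bridge (Q U V E : ℚ) (s : ℕ) (hm1 : Q - 1 ≠ 0) (hm2 : Q + 1 ≠ 0) :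
    (Q^2-1) * (1 + 2/(Q^2-1)*U - 2/(Q-1)*V + 2^(s-1)*((3-Q)/(Q-1) + (1-Q)/(Q+1)*E))
      = (Q^2-1) + 2*U - 2*(Q+1)*V + 2^(s-1)*((3-Q)*(Q+1) - (Q-1)^2*E) := by
  have hQ2 : Q^2 - 1 ≠ 0 := by
    intro h
    rcases mul_eq_zero.mp (by nlinarith : (Q-1)*(Q+1) = 0) with h' | h'
    exacts [hm1 h', hm2 h']
  field_simp
  ring

/-- The genus of `Γ₀¹(n)\T` is `0` iff `n` is a prime of degree 1 or
the square of such a prime, and `1` iff `n` is a product of two distinct primes of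
degree 1 or a prime of degree 2. -/
theorem genus_zero_one_classification {Fq : Type*} [Field Fq] [Fintype Fq]
    (hq : Odd (Fintype.card Fq))
    (s : ℕ) (p : Fin s → Polynomial Fq) (r : Fin s → ℕ)
    (hirr : ∀ i, Irreducible (p i)) (hmon : ∀ i, (p i).Monic) (hr : ∀ i, 1 ≤ r i)
    (hinj : Function.Injective p) (hs : 1 ≤ s) :
    (genusFormula s p r = 0 ↔
      (s = 1 ∧ ∀ i, (p i).natDegree = 1 ∧ (r i = 1 ∨ r i = 2))) ∧
    (genusFormula s p r = 1 ↔
      ((s = 2 ∧ ∀ i, (p i).natDegree = 1 ∧ r i = 1) ∨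
        (s = 1 ∧ ∀ i, (p i).natDegree = 2 ∧ r i = 1))) := by
  classical
  have hcard : 3 ≤ Fintype.card Fq := by
    have h2 : 1 < Fintype.card Fq := Fintype.one_lt_card
    obtain ⟨k, hk⟩ := hq; omega
  have hQ3 : (3:ℚ) ≤ (Fintype.card Fq : ℚ) := by exact_mod_cast hcard
  have hQpos : (0:ℚ) < (Fintype.card Fq : ℚ)^2 - 1 := by nlinarith
  have hQne : ((Fintype.card Fq : ℚ)^2 - 1) ≠ 0 := hQpos.ne'
  have hd : ∀ i, 1 ≤ (p i).natDegree := fun i => (hirr i).natDegree_pos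
  set G := GG (Fintype.card Fq : ℚ) s (fun i => (p i).natDegree) r with hGdef
  have key : ((Fintype.card Fq : ℚ)^2 - 1) * genusFormula s p r = G := by
    have hm1 : ((Fintype.card Fq : ℚ) - 1) ≠ 0 := by intro h; nlinarith
    have hm2 : ((Fintype.card Fq : ℚ) + 1) ≠ 0 := by intro h; nlinarith
    rw [hGdef]
    simp only [genusFormula, GG, uu, vv]
    exact bridge _ _ _ _ s hm1 hm2
  have e0 : genusFormula s p r = 0 ↔ G = 0 := by
    constructor
    · intro h; rw [← key, h, mul_zero]
    · intro h; rw [h] at key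
      exact (mul_eq_zero.mp key).resolve_left hQne
  have e1 : genusFormula s p r = 1 ↔ G = (Fintype.card Fq : ℚ)^2 - 1 := by
    constructor
    · intro h; rw [← key, h, mul_one]
    · intro h
      have h2 : ((Fintype.card Fq : ℚ)^2 - 1) * genusFormula s p r
          = ((Fintype.card Fq : ℚ)^2 - 1) * 1 := by rw [key, h, mul_one]
      exact mul_left_cancel₀ hQne h2
  have hsum1 : ∀ i, 1 ≤ (p i).natDegree * r i := fun i =>
    Nat.one_le_iff_ne_zero.mpr (Nat.mul_ne_zero (by have := hd i; omega) (by have := hr i; omega))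
  rcases le_or_gt 3 (∑ i, (p i).natDegree * r i) with hM | hM
  · -- large case: G ≥ 2(Q²-1), both sides of both iffs are false
    have hb : 2*((Fintype.card Fq : ℚ)^2-1) ≤ G :=
      GG_bound (Fintype.card Fq : ℚ) hQ3 s hs (fun i => (p i).natDegree) r hd hr hM
    have hne0 : G ≠ 0 := by
      intro h; rw [h] at hb; nlinarith
    have hne1 : G ≠ (Fintype.card Fq : ℚ)^2 - 1 := by
      intro h; rw [h] at hb; nlinarith
    constructor
    · rw [e0]
      apply iff_of_false hne0
      rintro ⟨hs1, hall⟩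
      subst hs1
      rw [Fin.sum_univ_one] at hM
      obtain ⟨ha, hb'⟩ := hall 0
      rw [ha] at hM
      omega
    · rw [e1]
      apply iff_of_false hne1
      rintro (⟨hs2, hall⟩ | ⟨hs1, hall⟩)
      · subst hs2
        rw [Fin.sum_univ_two] at hM
        obtain ⟨ha0, hb0⟩ := hall 0
        obtain ⟨ha1, hb1⟩ := hall 1
        rw [ha0, ha1, hb0, hb1] at hM
        omega
      · subst hs1
        rw [Fin.sum_univ_one] at hM
        obtain ⟨ha, hb'⟩ := hall 0
        rw [ha, hb'] at hM
        omega
  · -- small case: total degree ≤ 2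
    have hsle : s ≤ ∑ i, (p i).natDegree * r i := by
      calc s = ∑ _i : Fin s, 1 := by simp
      _ ≤ ∑ i, (p i).natDegree * r i := Finset.sum_le_sum (fun i _ => hsum1 i)
    have hs12 : s = 1 ∨ s = 2 := by omega
    rcases hs12 with hs1 | hs2
    · subst hs1
      rw [Fin.sum_univ_one] at hM
      have htri : ((p 0).natDegree = 1 ∧ r 0 = 1) ∨ ((p 0).natDegree = 1 ∧ r 0 = 2)
          ∨ ((p 0).natDegree = 2 ∧ r 0 = 1) := by
        have := hd 0; have := hr 0
        rcases Nat.lt_or_ge ((p 0).natDegree) 2 with h | h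
        · have : (p 0).natDegree = 1 := by omega
          have hrr : r 0 ≤ 2 := by nlinarith
          omega
        · have h2 : (p 0).natDegree = 2 := by nlinarith
          have hrr : r 0 = 1 := by nlinarith
          omega
      rcases htri with ⟨h1, h2⟩ | ⟨h1, h2⟩ | ⟨h1, h2⟩
      · have hval : G = 0 := GG_val_11 _ _ _ h1 h2
        constructor
        · rw [e0, hval]
          exact iff_of_true rfl ⟨rfl, fun i => by
            have : i = 0 := Subsingleton.elim i 0
            rw [this]; exact ⟨h1, Or.inl h2⟩⟩
        · rw [e1, hval]
          apply iff_of_false (by intro h; exact hQpos.ne' h.symm)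
          rintro (⟨hs2, _⟩ | ⟨_, hall⟩)
          · omega
          · have := (hall 0).1; omega
      · have hval : G = 0 := GG_val_12 _ _ _ h1 h2
        constructor
        · rw [e0, hval]
          exact iff_of_true rfl ⟨rfl, fun i => by
            have : i = 0 := Subsingleton.elim i 0
            rw [this]; exact ⟨h1, Or.inr h2⟩⟩
        · rw [e1, hval]
          apply iff_of_false (by intro h; exact hQpos.ne' h.symm)
          rintro (⟨hs2, _⟩ | ⟨_, hall⟩)
          · omega
          · have := (hall 0).1; omega
      · have hval : G = (Fintype.card Fq : ℚ)^2 - 1 := GG_val_21 _ _ _ h1 h2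
        constructor
        · rw [e0, hval]
          apply iff_of_false hQpos.ne'
          rintro ⟨_, hall⟩
          have := (hall 0).1; omega
        · rw [e1, hval]
          exact iff_of_true rfl (Or.inr ⟨rfl, fun i => by
            have : i = 0 := Subsingleton.elim i 0
            rw [this]; exact ⟨h1, h2⟩⟩)
    · subst hs2
      rw [Fin.sum_univ_two] at hM
      have h00 : (p 0).natDegree * r 0 = 1 := by
        have := hsum1 0; have := hsum1 1; omega
      have h11 : (p 1).natDegree * r 1 = 1 := by
        have := hsum1 0; have := hsum1 1; omega
      have hd0 : (p 0).natDegree = 1 := Nat.eq_one_of_mul_eq_one_right h00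
      have hr0 : r 0 = 1 := Nat.eq_one_of_mul_eq_one_left h00
      have hd1 : (p 1).natDegree = 1 := Nat.eq_one_of_mul_eq_one_right h11
      have hr1 : r 1 = 1 := Nat.eq_one_of_mul_eq_one_left h11
      have hall_d : ∀ i : Fin 2, (p i).natDegree = 1 := by
        rw [Fin.forall_fin_two]; exact ⟨hd0, hd1⟩
      have hall_r : ∀ i : Fin 2, r i = 1 := by
        rw [Fin.forall_fin_two]; exact ⟨hr0, hr1⟩
      have hval : G = (Fintype.card Fq : ℚ)^2 - 1 := GG_val_s2 _ _ _ hall_d hall_r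
      constructor
      · rw [e0, hval]
        apply iff_of_false hQpos.ne'
        rintro ⟨hs1, _⟩; omega
      · rw [e1, hval]
        exact iff_of_true rfl (Or.inl ⟨rfl, fun i => ⟨hall_d i, hall_r i⟩⟩)
end

section
/- Let F = F_q(T) with q odd, and S = 1/(T+1)^q ∈ F. Define rational functions x(z) = −T(z^{q+1} + z^q + S^{q−1}z + S^q)/(z^{q+1} + Sz^q + S^{q−1}z + S^q) and y(z) = −(T+1)(z^{q+1} + z^q + S^{q−1}z + S^q)/(z^{q+1} + S^{q−1}z) in F(z). Then x(z)^{q+1}/(T + x(z)) = y(z)^{q+1}/((T+1) + y(z)) as elements of F(z). -/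
set_option maxRecDepth 8000 in
set_option maxHeartbeats 2000000 in
private lemma X0_aux {K : Type*} [Field K] (q m : ℕ) (t s z : K)
    (hqm : q = m + 1) (he : Even (q + 1))
    (frobZS : (z + s) ^ q = z ^ q + s ^ q)
    (frobT : (t + 1) ^ q = t ^ q + 1)
    (hs : s * (t + 1) ^ q = 1)
    (hz : z ≠ 0) (ht : t ≠ 0) (ht1 : t + 1 ≠ 0)
    (hs1 : s ≠ 1)
    (hzs : z + s ≠ 0) (hW : z ^ q + s ^ (q - 1) ≠ 0) :
    (-t * (z ^ (q + 1) + z ^ q + s ^ (q - 1) * z + s ^ q) /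
        (z ^ (q + 1) + s * z ^ q + s ^ (q - 1) * z + s ^ q)) ^ (q + 1) /
      (t + -t * (z ^ (q + 1) + z ^ q + s ^ (q - 1) * z + s ^ q) /
        (z ^ (q + 1) + s * z ^ q + s ^ (q - 1) * z + s ^ q)) =
    (-(t + 1) * (z ^ (q + 1) + z ^ q + s ^ (q - 1) * z + s ^ q) /
        (z ^ (q + 1) + s ^ (q - 1) * z)) ^ (q + 1) /
      ((t + 1) + -(t + 1) * (z ^ (q + 1) + z ^ q + s ^ (q - 1) * z + s ^ q) /
        (z ^ (q + 1) + s ^ (q - 1) * z)) := by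
  subst hqm
  simp only [Nat.add_sub_cancel] at *
  set N := z ^ (m + 1 + 1) + z ^ (m + 1) + s ^ m * z + s ^ (m + 1) with hN
  set Dx := z ^ (m + 1 + 1) + s * z ^ (m + 1) + s ^ m * z + s ^ (m + 1) with hDxdef
  set Dy := z ^ (m + 1 + 1) + s ^ m * z with hDydef
  set W := z ^ (m + 1) + s ^ m with hWdef
  have hs10 : s - 1 ≠ 0 := sub_ne_zero_of_ne hs1
  have hDx : Dx = W * (z + s) := by rw [hDxdef, hWdef]; ring
  have hDy : Dy = z * W := by rw [hDydef, hWdef]; ring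
  have hDx0 : Dx ≠ 0 := by rw [hDx]; exact mul_ne_zero hW hzs
  have hDy0 : Dy ≠ 0 := by rw [hDy]; exact mul_ne_zero hz hW
  have hx : t + -t * N / Dx = t * (s - 1) * z ^ (m + 1) / Dx := by
    rw [eq_div_iff hDx0, add_mul, div_mul_cancel₀ _ hDx0, hDxdef, hN]
    ring
  have hy : (t + 1) + -(t + 1) * N / Dy = -(t + 1) * (z + s) ^ (m + 1) / Dy := by
    rw [eq_div_iff hDy0, add_mul, div_mul_cancel₀ _ hDy0, hDydef, hN]
    linear_combination (t + 1) * frobZS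
  have hx0 : t + -t * N / Dx ≠ 0 := by
    rw [hx]
    exact div_ne_zero (mul_ne_zero (mul_ne_zero ht hs10) (pow_ne_zero _ hz)) hDx0
  have hy0 : (t + 1) + -(t + 1) * N / Dy ≠ 0 := by
    rw [hy]
    exact div_ne_zero (mul_ne_zero (neg_ne_zero.mpr ht1) (pow_ne_zero _ hzs)) hDy0
  rw [div_eq_div_iff hx0 hy0, hx, hy]
  have hxp : (-t * N / Dx) ^ (m + 1 + 1) = t ^ (m + 1 + 1) * N ^ (m + 1 + 1) / Dx ^ (m + 1 + 1) := by
    rw [show -t * N / Dx = -(t * N / Dx) by ring, he.neg_pow, div_pow, mul_pow]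
  have hyp : (-(t + 1) * N / Dy) ^ (m + 1 + 1) =
      (t + 1) ^ (m + 1 + 1) * N ^ (m + 1 + 1) / Dy ^ (m + 1 + 1) := by
    rw [show -(t + 1) * N / Dy = -((t + 1) * N / Dy) by ring, he.neg_pow, div_pow, mul_pow]
  rw [hxp, hyp, div_mul_div_comm, div_mul_div_comm,
    div_eq_div_iff (mul_ne_zero (pow_ne_zero _ hDx0) hDy0)
      (mul_ne_zero (pow_ne_zero _ hDy0) hDx0)]
  have hscal : t ^ (m + 1 + 1) * (-(t + 1)) = (t + 1) ^ (m + 1 + 1) * (t * (s - 1)) := by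
    have h1 : (t + 1) ^ (m + 1 + 1) = (t ^ (m + 1) + 1) * (t + 1) := by
      rw [pow_succ, frobT]
    rw [h1]
    linear_combination (t * s * (t + 1)) * frobT - (t * (t + 1)) * hs
  rw [hDx, hDy, mul_pow, mul_pow]
  linear_combination (N ^ (m + 1 + 1) * (z + s) ^ (m + 1 + 1) * z ^ (m + 1 + 1) *
    W ^ (m + 1 + 1) * W) * hscal

/-- The pair `(x(z), y(z))` of rational functions parametrizes the
Drinfeld modular curve `X₀(T(T+1))`: `x(z)^{q+1}/(T + x(z)) = y(z)^{q+1}/((T+1) + y(z))`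
in `F(z)` where `F = Fq(T)` and `S = 1/(T+1)^q`. -/
theorem X0_TT1_parametrization (Fq : Type*) [Field Fq] [Fintype Fq] [DecidableEq Fq]
    (hq : Odd (Fintype.card Fq)) :
    let q : ℕ := Fintype.card Fq
    let T : RatFunc Fq := RatFunc.X
    let S : RatFunc Fq := ((T + 1) ^ q)⁻¹
    let Z : RatFunc (RatFunc Fq) := RatFunc.X
    let cT : RatFunc (RatFunc Fq) := RatFunc.C T
    let cS : RatFunc (RatFunc Fq) := RatFunc.C S
    let x : RatFunc (RatFunc Fq) :=
      -cT * (Z ^ (q + 1) + Z ^ q + cS ^ (q - 1) * Z + cS ^ q) /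
        (Z ^ (q + 1) + cS * Z ^ q + cS ^ (q - 1) * Z + cS ^ q)
    let y : RatFunc (RatFunc Fq) :=
      -(cT + 1) * (Z ^ (q + 1) + Z ^ q + cS ^ (q - 1) * Z + cS ^ q) /
        (Z ^ (q + 1) + cS ^ (q - 1) * Z)
    x ^ (q + 1) / (cT + x) = y ^ (q + 1) / ((cT + 1) + y) := by
  intro q T S Z cT cS x y
  have hq1 : 0 < q := Fintype.card_pos
  -- characteristic facts
  haveI : CharP Fq (ringChar Fq) := ringChar.charP Fq
  obtain ⟨n, hp, hcard⟩ := FiniteField.card Fq (ringChar Fq)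
  haveI hfact : Fact (ringChar Fq).Prime := ⟨hp⟩
  haveI hchar1 : CharP (RatFunc Fq) (ringChar Fq) :=
    charP_of_injective_algebraMap (algebraMap Fq (RatFunc Fq)).injective _
  haveI hchar2 : CharP (RatFunc (RatFunc Fq)) (ringChar Fq) :=
    charP_of_injective_algebraMap (algebraMap (RatFunc Fq) (RatFunc (RatFunc Fq))).injective _
  have frob : ∀ a b : RatFunc (RatFunc Fq), (a + b) ^ q = a ^ q + b ^ q := by
    intro a b
    show (a + b) ^ (Fintype.card Fq) = a ^ (Fintype.card Fq) + b ^ (Fintype.card Fq)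
    rw [hcard]
    exact add_pow_char_pow ..
  -- basic nonvanishing in RatFunc Fq
  have hinj : Function.Injective (algebraMap (Polynomial Fq) (RatFunc Fq)) :=
    IsFractionRing.injective _ _
  have hT1 : T + 1 ≠ 0 := by
    have : T + 1 = algebraMap (Polynomial Fq) (RatFunc Fq) (Polynomial.X + Polynomial.C 1) := by
      simp [T, map_add, RatFunc.algebraMap_X, RatFunc.algebraMap_C]
    rw [this]
    exact (map_ne_zero_iff _ hinj).mpr (Polynomial.X_add_C_ne_zero 1)
  have hT1q : (T + 1) ^ q ≠ 0 := pow_ne_zero _ hT1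
  have hT1q1 : (T + 1) ^ q ≠ 1 := by
    have heq : (T + 1) ^ q =
        algebraMap (Polynomial Fq) (RatFunc Fq) ((Polynomial.X + Polynomial.C 1) ^ q) := by
      simp [T, map_add, map_pow, RatFunc.algebraMap_X, RatFunc.algebraMap_C]
    rw [heq, show (1 : RatFunc Fq) = algebraMap (Polynomial Fq) (RatFunc Fq) 1 by simp]
    intro h
    have h2 := hinj h
    have h3 := congrArg Polynomial.natDegree h2
    rw [Polynomial.natDegree_pow, Polynomial.natDegree_X_add_C, Polynomial.natDegree_one,
      mul_one] at h3
    exact hq1.ne' h3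
  have hS0 : S ≠ 0 := inv_ne_zero hT1q
  have hS1 : S ≠ 1 := by
    simp only [S, ne_eq, inv_eq_one]
    exact hT1q1
  -- facts about constants in RatFunc (RatFunc Fq)
  have hCinj : Function.Injective (RatFunc.C : RatFunc Fq → RatFunc (RatFunc Fq)) := by
    intro a b h
    have h2 : algebraMap (Polynomial (RatFunc Fq)) (RatFunc (RatFunc Fq)) (Polynomial.C a) =
        algebraMap (Polynomial (RatFunc Fq)) (RatFunc (RatFunc Fq)) (Polynomial.C b) := by
      rw [RatFunc.algebraMap_C, RatFunc.algebraMap_C]; exact h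
    exact Polynomial.C_injective (IsFractionRing.injective _ _ h2)
  have hcT : cT ≠ 0 := by
    intro h
    have hT0 : T = 0 := hCinj (by rw [map_zero]; exact h)
    exact RatFunc.X_ne_zero hT0
  have hcT1 : cT + 1 ≠ 0 := by
    intro h
    apply hT1
    apply hCinj
    rw [map_add, map_one, map_zero]
    exact h
  have hcs : cS * (cT + 1) ^ q = 1 := by
    have : cS = ((cT + 1) ^ q)⁻¹ := by
      simp only [cS, S, cT, map_inv₀, map_pow, map_add, map_one]
    rw [this]
    exact inv_mul_cancel₀ (pow_ne_zero _ hcT1)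
  have hcS1 : cS ≠ 1 := by
    intro h
    exact hS1 (hCinj (by simpa using h))
  -- nonvanishing of denominator pieces
  have hinj2 : Function.Injective
      (algebraMap (Polynomial (RatFunc Fq)) (RatFunc (RatFunc Fq))) :=
    IsFractionRing.injective _ _
  have hZ : Z ≠ 0 := RatFunc.X_ne_zero
  have hZS : Z + cS ≠ 0 := by
    have : Z + cS = algebraMap (Polynomial (RatFunc Fq)) (RatFunc (RatFunc Fq))
        (Polynomial.X + Polynomial.C S) := by
      simp [Z, cS, map_add, RatFunc.algebraMap_X, RatFunc.algebraMap_C]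
    rw [this]
    exact (map_ne_zero_iff _ hinj2).mpr (Polynomial.X_add_C_ne_zero S)
  have hW : Z ^ q + cS ^ (q - 1) ≠ 0 := by
    have : Z ^ q + cS ^ (q - 1) = algebraMap (Polynomial (RatFunc Fq)) (RatFunc (RatFunc Fq))
        (Polynomial.X ^ q + Polynomial.C (S ^ (q - 1))) := by
      simp [Z, cS, map_add, map_pow, RatFunc.algebraMap_X, RatFunc.algebraMap_C]
    rw [this]
    exact (map_ne_zero_iff _ hinj2).mpr (Polynomial.X_pow_add_C_ne_zero hq1 _)
  exact X0_aux q (q - 1) cT cS Z (Nat.succ_pred_eq_of_pos hq1).symm hq.add_one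
    (frob Z cS) (by simpa using frob cT 1) hcs hZ hcT hcT1 hcS1 hZS hW
end
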